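/- arXiv:math/0107029 — 11 statements merged into one kernel-verified Lean document; each statement's English description precedes it below -/
import Mathlib

section
/- For every integer n ≥ 1, the quantum permutation algebra 𝒜_t(n) admits a Hopf algebra structure over ℂ in which: the comultiplication is the unique algebra homomorphism Δ : 𝒜_t(n) → 𝒜_t(n) ⊗ 𝒜_t(n) with Δ(x_{ij}) = Σ_{k=1}^n x_{ik} ⊗ x_{kj}; the counit is the unique algebra homomorphism ε : 𝒜_t(n) → ℂ with ε(x_{ij}) = δ_{ij}; and the antipode is the unique algebra anti-homomorphism S : 𝒜_t(n) → 𝒜_t(n) with S(x_{ij}) = x_{ji}. That is, Δ is coassociative, ε satisfies the counit laws, and m∘(S⊗id)∘Δ = η∘ε = m∘(id⊗S)∘Δ, where m is multiplication and η the unit map. -/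
open scoped TensorProduct

noncomputable section

/-- Relations of the quantum permutation algebra `𝒜_t(n)`. -/
inductive QPermRel (n : ℕ) :
    FreeAlgebra ℂ (Fin n × Fin n) → FreeAlgebra ℂ (Fin n × Fin n) → Prop
  | row (i j k : Fin n) :
      QPermRel n (FreeAlgebra.ι ℂ (i, j) * FreeAlgebra.ι ℂ (i, k))
        (if j = k then FreeAlgebra.ι ℂ (i, j) else 0)
  | col (i j k : Fin n) :
      QPermRel n (FreeAlgebra.ι ℂ (j, i) * FreeAlgebra.ι ℂ (k, i))
        (if j = k then FreeAlgebra.ι ℂ (j, i) else 0)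
  | rowSum (i : Fin n) : QPermRel n (∑ l : Fin n, FreeAlgebra.ι ℂ (i, l)) 1
  | colSum (i : Fin n) : QPermRel n (∑ l : Fin n, FreeAlgebra.ι ℂ (l, i)) 1

/-- The quantum permutation algebra `𝒜_t(n)`. -/
abbrev QPerm (n : ℕ) : Type := RingQuot (QPermRel n)

/-- The generators `x_{ij}` of `𝒜_t(n)`. -/
def qx (n : ℕ) (i j : Fin n) : QPerm n :=
  RingQuot.mkAlgHom ℂ (QPermRel n) (FreeAlgebra.ι ℂ (i, j))

namespace QPermAux

variable {n : ℕ}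

theorem qx_row (i j k : Fin n) : qx n i j * qx n i k = if j = k then qx n i j else 0 := by
  have h := RingQuot.mkAlgHom_rel ℂ (QPermRel.row (n := n) i j k)
  simpa [qx, map_mul, apply_ite (RingQuot.mkAlgHom ℂ (QPermRel n))] using h

theorem qx_col (i j k : Fin n) : qx n j i * qx n k i = if j = k then qx n j i else 0 := by
  have h := RingQuot.mkAlgHom_rel ℂ (QPermRel.col (n := n) i j k)
  simpa [qx, map_mul, apply_ite (RingQuot.mkAlgHom ℂ (QPermRel n))] using h

theorem qx_rowSum (i : Fin n) : ∑ l : Fin n, qx n i l = 1 := by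
  have h := RingQuot.mkAlgHom_rel ℂ (QPermRel.rowSum (n := n) i)
  simpa [qx, map_sum] using h

theorem qx_colSum (i : Fin n) : ∑ l : Fin n, qx n l i = 1 := by
  have h := RingQuot.mkAlgHom_rel ℂ (QPermRel.colSum (n := n) i)
  simpa [qx, map_sum] using h

/-- Extensionality for algebra homs out of `QPerm n`. -/
theorem hom_ext {B : Type*} [Semiring B] [Algebra ℂ B] {f g : QPerm n →ₐ[ℂ] B}
    (h : ∀ i j, f (qx n i j) = g (qx n i j)) : f = g := by
  refine RingQuot.ringQuot_ext' ℂ _ _ (FreeAlgebra.hom_ext (funext fun p => ?_))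
  simpa [qx] using h p.1 p.2

/-- The free comultiplication. -/
def ΔF (n : ℕ) : FreeAlgebra ℂ (Fin n × Fin n) →ₐ[ℂ] (QPerm n ⊗[ℂ] QPerm n) :=
  FreeAlgebra.lift ℂ fun p => ∑ k : Fin n, qx n p.1 k ⊗ₜ[ℂ] qx n k p.2

theorem ΔF_rel {x y : FreeAlgebra ℂ (Fin n × Fin n)} (h : QPermRel n x y) :
    ΔF n x = ΔF n y := by
  induction h with
  | row i j k =>
      rcases eq_or_ne j k with rfl | hjk
      · simp [ΔF, map_mul, FreeAlgebra.lift_ι_apply, Finset.sum_mul_sum,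
          Algebra.TensorProduct.tmul_mul_tmul, qx_row, TensorProduct.ite_tmul,
          TensorProduct.tmul_ite]
      · simp [ΔF, map_mul, FreeAlgebra.lift_ι_apply, Finset.sum_mul_sum,
          Algebra.TensorProduct.tmul_mul_tmul, qx_row, TensorProduct.ite_tmul,
          TensorProduct.tmul_ite, hjk]
  | col i j k =>
      rcases eq_or_ne j k with rfl | hjk
      · simp [ΔF, map_mul, FreeAlgebra.lift_ι_apply, Finset.sum_mul_sum,
          Algebra.TensorProduct.tmul_mul_tmul, qx_col, TensorProduct.ite_tmul,
          TensorProduct.tmul_ite]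
      · simp [ΔF, map_mul, FreeAlgebra.lift_ι_apply, Finset.sum_mul_sum,
          Algebra.TensorProduct.tmul_mul_tmul, qx_col, TensorProduct.ite_tmul,
          TensorProduct.tmul_ite, hjk]
  | rowSum i =>
      rw [map_sum]
      simp only [ΔF, FreeAlgebra.lift_ι_apply]
      rw [Finset.sum_comm]
      simp [← TensorProduct.tmul_sum, qx_rowSum, ← TensorProduct.sum_tmul,
        Algebra.TensorProduct.one_def]
  | colSum i =>
      rw [map_sum]
      simp only [ΔF, FreeAlgebra.lift_ι_apply]
      rw [Finset.sum_comm]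
      simp only [← TensorProduct.sum_tmul, qx_colSum]
      simp [← TensorProduct.tmul_sum, qx_colSum, Algebra.TensorProduct.one_def]

def Δq (n : ℕ) : QPerm n →ₐ[ℂ] (QPerm n ⊗[ℂ] QPerm n) :=
  RingQuot.liftAlgHom ℂ ⟨ΔF n, fun _ _ h => ΔF_rel h⟩

theorem Δq_qx (i j : Fin n) : Δq n (qx n i j) = ∑ k : Fin n, qx n i k ⊗ₜ[ℂ] qx n k j := by
  simp [Δq, qx, RingQuot.liftAlgHom_mkAlgHom_apply, ΔF]

/-- The free counit. -/
def εF (n : ℕ) : FreeAlgebra ℂ (Fin n × Fin n) →ₐ[ℂ] ℂ :=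
  FreeAlgebra.lift ℂ fun p => if p.1 = p.2 then (1 : ℂ) else 0

theorem εF_rel {x y : FreeAlgebra ℂ (Fin n × Fin n)} (h : QPermRel n x y) :
    εF n x = εF n y := by
  induction h with
  | row i j k =>
      rw [map_mul, apply_ite (εF n)]
      simp only [εF, FreeAlgebra.lift_ι_apply, map_zero]
      split_ifs <;> simp_all
  | col i j k =>
      rw [map_mul, apply_ite (εF n)]
      simp only [εF, FreeAlgebra.lift_ι_apply, map_zero]
      split_ifs <;> simp_all
  | rowSum i => simp [εF, map_sum, FreeAlgebra.lift_ι_apply]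
  | colSum i => simp [εF, map_sum, FreeAlgebra.lift_ι_apply]

def εq (n : ℕ) : QPerm n →ₐ[ℂ] ℂ :=
  RingQuot.liftAlgHom ℂ ⟨εF n, fun _ _ h => εF_rel h⟩

theorem εq_qx (i j : Fin n) : εq n (qx n i j) = if i = j then 1 else 0 := by
  simp [εq, qx, RingQuot.liftAlgHom_mkAlgHom_apply, εF]

theorem op_sum {ι M : Type*} [AddCommMonoid M] (s : Finset ι) (f : ι → M) :
    ∑ i ∈ s, MulOpposite.op (f i) = MulOpposite.op (∑ i ∈ s, f i) :=
  (map_sum (MulOpposite.opAddEquiv (α := M)) f s).symm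

/-- The free antipode (into the opposite algebra). -/
def SF (n : ℕ) : FreeAlgebra ℂ (Fin n × Fin n) →ₐ[ℂ] (QPerm n)ᵐᵒᵖ :=
  FreeAlgebra.lift ℂ fun p => MulOpposite.op (qx n p.2 p.1)

theorem SF_rel {x y : FreeAlgebra ℂ (Fin n × Fin n)} (h : QPermRel n x y) :
    SF n x = SF n y := by
  induction h with
  | row i j k =>
      rcases eq_or_ne j k with rfl | hjk
      · simp [SF, map_mul, FreeAlgebra.lift_ι_apply, ← MulOpposite.op_mul, qx_col]
      · simp [SF, map_mul, FreeAlgebra.lift_ι_apply, ← MulOpposite.op_mul, qx_col,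
          hjk, Ne.symm hjk]
  | col i j k =>
      rcases eq_or_ne j k with rfl | hjk
      · simp [SF, map_mul, FreeAlgebra.lift_ι_apply, ← MulOpposite.op_mul, qx_row]
      · simp [SF, map_mul, FreeAlgebra.lift_ι_apply, ← MulOpposite.op_mul, qx_row,
          hjk, Ne.symm hjk]
  | rowSum i =>
      simp [SF, map_sum, FreeAlgebra.lift_ι_apply, op_sum, qx_colSum]
  | colSum i =>
      simp [SF, map_sum, FreeAlgebra.lift_ι_apply, op_sum, qx_rowSum]

def Sop (n : ℕ) : QPerm n →ₐ[ℂ] (QPerm n)ᵐᵒᵖ :=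
  RingQuot.liftAlgHom ℂ ⟨SF n, fun _ _ h => SF_rel h⟩

theorem Sop_qx (i j : Fin n) : Sop n (qx n i j) = MulOpposite.op (qx n j i) := by
  simp [Sop, qx, RingQuot.liftAlgHom_mkAlgHom_apply, SF]

def Sq (n : ℕ) : QPerm n →ₗ[ℂ] QPerm n :=
  (MulOpposite.opLinearEquiv ℂ).symm.toLinearMap ∘ₗ (Sop n).toLinearMap

theorem Sq_one : Sq n 1 = 1 := by simp [Sq]

theorem Sq_mul (a b : QPerm n) : Sq n (a * b) = Sq n b * Sq n a := by
  simp [Sq, map_mul]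

theorem Sq_qx (i j : Fin n) : Sq n (qx n i j) = qx n j i := by
  simp [Sq, Sop_qx]

end QPermAux


namespace QPermAux

variable {n : ℕ}

theorem conv_left (S : QPerm n →ₗ[ℂ] QPerm n) (hS : ∀ a b, S (a * b) = S b * S a)
    (u v : QPerm n ⊗[ℂ] QPerm n) (r : ℂ)
    (hu : LinearMap.mul' ℂ (QPerm n) (TensorProduct.map S LinearMap.id u) = r • 1) :
    LinearMap.mul' ℂ (QPerm n) (TensorProduct.map S LinearMap.id (u * v)) =
      r • LinearMap.mul' ℂ (QPerm n) (TensorProduct.map S LinearMap.id v) := by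
  induction v using TensorProduct.induction_on with
  | zero => simp
  | add v w hv hw => simp [mul_add, map_add, hv, hw]
  | tmul c d =>
    have key : ∀ w : QPerm n ⊗[ℂ] QPerm n,
        LinearMap.mul' ℂ (QPerm n) (TensorProduct.map S LinearMap.id (w * (c ⊗ₜ[ℂ] d))) =
          S c * LinearMap.mul' ℂ (QPerm n) (TensorProduct.map S LinearMap.id w) * d := by
      intro w
      induction w using TensorProduct.induction_on with
      | zero => simp
      | add x y hx hy => simp [add_mul, map_add, hx, hy, mul_add]
      | tmul a b =>
        simp only [Algebra.TensorProduct.tmul_mul_tmul, TensorProduct.map_tmul,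
          LinearMap.mul'_apply, LinearMap.id_coe, id_eq, hS]
        simp [mul_assoc]
    rw [key u, hu]
    simp [TensorProduct.map_tmul, LinearMap.mul'_apply, mul_smul_comm, smul_mul_assoc]

theorem conv_right (S : QPerm n →ₗ[ℂ] QPerm n) (hS : ∀ a b, S (a * b) = S b * S a)
    (u v : QPerm n ⊗[ℂ] QPerm n) (r : ℂ)
    (hv : LinearMap.mul' ℂ (QPerm n) (TensorProduct.map LinearMap.id S v) = r • 1) :
    LinearMap.mul' ℂ (QPerm n) (TensorProduct.map LinearMap.id S (u * v)) =
      r • LinearMap.mul' ℂ (QPerm n) (TensorProduct.map LinearMap.id S u) := by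
  induction u using TensorProduct.induction_on with
  | zero => simp
  | add x y hx hy => simp [add_mul, map_add, hx, hy]
  | tmul a b =>
    have key : ∀ w : QPerm n ⊗[ℂ] QPerm n,
        LinearMap.mul' ℂ (QPerm n) (TensorProduct.map LinearMap.id S ((a ⊗ₜ[ℂ] b) * w)) =
          a * LinearMap.mul' ℂ (QPerm n) (TensorProduct.map LinearMap.id S w) * S b := by
      intro w
      induction w using TensorProduct.induction_on with
      | zero => simp
      | add x y hx hy => simp [mul_add, map_add, hx, hy, add_mul]
      | tmul c d =>
        simp only [Algebra.TensorProduct.tmul_mul_tmul, TensorProduct.map_tmul,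
          LinearMap.mul'_apply, LinearMap.id_coe, id_eq, hS]
        simp [mul_assoc]
    rw [key v, hv]
    simp [TensorProduct.map_tmul, LinearMap.mul'_apply, mul_smul_comm, smul_mul_assoc]

end QPermAux


open QPermAux

/-- For every `n ≥ 1`, the quantum permutation algebra `𝒜_t(n)` admits a
Hopf algebra structure: there is a unique algebra homomorphism
`Δ : 𝒜_t(n) → 𝒜_t(n) ⊗ 𝒜_t(n)` with `Δ(x_{ij}) = Σ_k x_{ik} ⊗ x_{kj}`, a unique algebra
homomorphism `ε : 𝒜_t(n) → ℂ` with `ε(x_{ij}) = δ_{ij}`, and a unique algebra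
anti-homomorphism `S` with `S(x_{ij}) = x_{ji}`; moreover `Δ` is coassociative, `ε` satisfies
the counit laws, and `S` satisfies the antipode identities. -/
theorem stmt_0 (n : ℕ) (hn : 1 ≤ n) :
    ∃ (Δ : QPerm n →ₐ[ℂ] (QPerm n ⊗[ℂ] QPerm n)) (ε : QPerm n →ₐ[ℂ] ℂ)
      (S : QPerm n →ₗ[ℂ] QPerm n),
      (∀ i j : Fin n, Δ (qx n i j) = ∑ k : Fin n, qx n i k ⊗ₜ[ℂ] qx n k j) ∧
      (∀ Δ' : QPerm n →ₐ[ℂ] (QPerm n ⊗[ℂ] QPerm n),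
        (∀ i j : Fin n, Δ' (qx n i j) = ∑ k : Fin n, qx n i k ⊗ₜ[ℂ] qx n k j) → Δ' = Δ) ∧
      (∀ i j : Fin n, ε (qx n i j) = if i = j then 1 else 0) ∧
      (∀ ε' : QPerm n →ₐ[ℂ] ℂ,
        (∀ i j : Fin n, ε' (qx n i j) = if i = j then 1 else 0) → ε' = ε) ∧
      (S 1 = 1) ∧ (∀ a b : QPerm n, S (a * b) = S b * S a) ∧
      (∀ i j : Fin n, S (qx n i j) = qx n j i) ∧
      (∀ S' : QPerm n →ₗ[ℂ] QPerm n, S' 1 = 1 → (∀ a b, S' (a * b) = S' b * S' a) →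
        (∀ i j : Fin n, S' (qx n i j) = qx n j i) → S' = S) ∧
      -- coassociativity
      (∀ h : QPerm n,
        (Algebra.TensorProduct.assoc ℂ ℂ ℂ (QPerm n) (QPerm n) (QPerm n))
            ((Algebra.TensorProduct.map Δ (AlgHom.id ℂ (QPerm n))) (Δ h)) =
          (Algebra.TensorProduct.map (AlgHom.id ℂ (QPerm n)) Δ) (Δ h)) ∧
      -- counit laws
      (∀ h : QPerm n,
        (Algebra.TensorProduct.lid ℂ (QPerm n))
            ((Algebra.TensorProduct.map ε (AlgHom.id ℂ (QPerm n))) (Δ h)) = h) ∧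
      (∀ h : QPerm n,
        (Algebra.TensorProduct.rid ℂ ℂ (QPerm n))
            ((Algebra.TensorProduct.map (AlgHom.id ℂ (QPerm n)) ε) (Δ h)) = h) ∧
      -- antipode identities : m∘(S⊗id)∘Δ = η∘ε = m∘(id⊗S)∘Δ
      (∀ h : QPerm n,
        (LinearMap.mul' ℂ (QPerm n)) ((TensorProduct.map S LinearMap.id) (Δ h)) =
          algebraMap ℂ (QPerm n) (ε h)) ∧
      (∀ h : QPerm n,
        (LinearMap.mul' ℂ (QPerm n)) ((TensorProduct.map LinearMap.id S) (Δ h)) =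
          algebraMap ℂ (QPerm n) (ε h)) := by
  classical
  have key : ∀ h : QPerm n,
      LinearMap.mul' ℂ (QPerm n) ((TensorProduct.map (Sq n) LinearMap.id) (Δq n h)) =
        algebraMap ℂ (QPerm n) (εq n h) ∧
      LinearMap.mul' ℂ (QPerm n) ((TensorProduct.map LinearMap.id (Sq n)) (Δq n h)) =
        algebraMap ℂ (QPerm n) (εq n h) := by
    intro h
    obtain ⟨w, rfl⟩ := RingQuot.mkAlgHom_surjective ℂ (QPermRel n) h
    induction w using FreeAlgebra.induction with
    | grade0 r =>
        rw [AlgHom.commutes]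
        constructor <;>
          simp [Algebra.TensorProduct.algebraMap_apply, Algebra.algebraMap_eq_smul_one,
            map_smul, Sq_one, LinearMap.mul'_apply, Algebra.TensorProduct.one_def]
    | grade1 p =>
        have hp : RingQuot.mkAlgHom ℂ (QPermRel n) (FreeAlgebra.ι ℂ p) = qx n p.1 p.2 := rfl
        rw [hp]
        constructor
        · rw [Δq_qx]
          simp only [map_sum, TensorProduct.map_tmul, LinearMap.mul'_apply,
            LinearMap.id_coe, id_eq, Sq_qx, qx_row, εq_qx]
          rcases eq_or_ne p.1 p.2 with h | h <;>
            simp [h, qx_colSum, Algebra.algebraMap_eq_smul_one]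
        · rw [Δq_qx]
          simp only [map_sum, TensorProduct.map_tmul, LinearMap.mul'_apply,
            LinearMap.id_coe, id_eq, Sq_qx, qx_col, εq_qx]
          rcases eq_or_ne p.1 p.2 with h | h <;>
            simp [h, qx_rowSum, Algebra.algebraMap_eq_smul_one]
    | mul a b ha hb =>
        rw [map_mul]
        constructor
        · rw [map_mul, conv_left (Sq n) Sq_mul _ _
            (εq n (RingQuot.mkAlgHom ℂ (QPermRel n) a))
            (by rw [ha.1, Algebra.algebraMap_eq_smul_one]), hb.1]
          simp [Algebra.algebraMap_eq_smul_one, smul_smul, map_mul, mul_comm]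
        · rw [map_mul, conv_right (Sq n) Sq_mul _ _
            (εq n (RingQuot.mkAlgHom ℂ (QPermRel n) b))
            (by rw [hb.2, Algebra.algebraMap_eq_smul_one]), ha.2]
          simp [Algebra.algebraMap_eq_smul_one, smul_smul, map_mul, mul_comm]
    | add a b ha hb =>
        rw [map_add]
        constructor <;> simp [map_add, ha.1, ha.2, hb.1, hb.2]
  refine ⟨Δq n, εq n, Sq n, fun i j => Δq_qx i j, ?_, fun i j => εq_qx i j, ?_,
    Sq_one, Sq_mul, fun i j => Sq_qx i j, ?_, ?_, ?_, ?_, fun h => (key h).1,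
    fun h => (key h).2⟩
  · intro Δ' hΔ'
    exact hom_ext fun i j => by rw [hΔ', Δq_qx]
  · intro ε' hε'
    exact hom_ext fun i j => by rw [hε', εq_qx]
  · intro S' h1 hm hx
    have hS'op : (AlgHom.ofLinearMap ((MulOpposite.opLinearEquiv ℂ).toLinearMap ∘ₗ S')
        (by simp [h1]) (fun x y => by simp [hm x y])) = Sop n := by
      refine hom_ext fun i j => ?_
      simp [AlgHom.ofLinearMap, Sop_qx, hx]
    ext a
    have := AlgHom.congr_fun hS'op a
    change MulOpposite.op (S' a) = Sop n a at this
    have := congrArg MulOpposite.unop this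
    simpa [Sq] using this
  · intro h
    have coass : (Algebra.TensorProduct.assoc ℂ ℂ ℂ (QPerm n) (QPerm n) (QPerm n)).toAlgHom.comp
        ((Algebra.TensorProduct.map (Δq n) (AlgHom.id ℂ (QPerm n))).comp (Δq n)) =
        (Algebra.TensorProduct.map (AlgHom.id ℂ (QPerm n)) (Δq n)).comp (Δq n) := by
      refine hom_ext fun i j => ?_
      simp only [AlgHom.coe_comp, Function.comp_apply, AlgEquiv.toAlgHom_eq_coe,
        AlgHom.coe_coe, AlgEquiv.toAlgHom_apply, Δq_qx, map_sum, Algebra.TensorProduct.map_tmul,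
        AlgHom.coe_id, id_eq, TensorProduct.sum_tmul, TensorProduct.tmul_sum,
        Algebra.TensorProduct.assoc_tmul]
      rw [Finset.sum_comm]
    have := AlgHom.congr_fun coass h
    simpa using this
  · intro h
    have hcl : (Algebra.TensorProduct.lid ℂ (QPerm n)).toAlgHom.comp
        ((Algebra.TensorProduct.map (εq n) (AlgHom.id ℂ (QPerm n))).comp (Δq n)) =
        AlgHom.id ℂ (QPerm n) := by
      refine hom_ext fun i j => ?_
      simp [Δq_qx, εq_qx, map_sum, Algebra.TensorProduct.map_tmul,
        Algebra.TensorProduct.lid_tmul, ite_smul, Finset.sum_ite_eq]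
    have := AlgHom.congr_fun hcl h
    simpa using this
  · intro h
    have hcr : (Algebra.TensorProduct.rid ℂ ℂ (QPerm n)).toAlgHom.comp
        ((Algebra.TensorProduct.map (AlgHom.id ℂ (QPerm n)) (εq n)).comp (Δq n)) =
        AlgHom.id ℂ (QPerm n) := by
      refine hom_ext fun i j => ?_
      simp [Δq_qx, εq_qx, map_sum, Algebra.TensorProduct.map_tmul,
        Algebra.TensorProduct.rid_tmul, ite_smul, Finset.sum_ite_eq']
    have := AlgHom.congr_fun hcr h
    simpa using this
end
end

section
/- Let A be a unital associative ℂ-algebra and n ≥ 1. There exists a unique algebra homomorphism α : A^{*n} → 𝒜_t(n) ⊗ A^{*n} satisfying α(ν_i(a)) = Σ_{k=1}^n x_{ik} ⊗ ν_k(a) for all 1 ≤ i ≤ n and a ∈ A, and α is a coaction making A^{*n} a left 𝒜_t(n)-comodule algebra: (Δ ⊗ id)∘α = (id ⊗ α)∘α and (ε ⊗ id)∘α = id, where Δ and ε are the comultiplication and counit of 𝒜_t(n). -/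
open scoped TensorProduct

noncomputable section

/-- Relations presenting the `n`-fold free product `A^{*n}` (coproduct of `n` copies of `A`
in the category of unital `ℂ`-algebras): the canonical map of each copy is an algebra
homomorphism. -/
inductive FreePowRel (A : Type) [Ring A] [Algebra ℂ A] (n : ℕ) :
    FreeAlgebra ℂ (Fin n × A) → FreeAlgebra ℂ (Fin n × A) → Prop
  | add (i : Fin n) (a b : A) :
      FreePowRel A n (FreeAlgebra.ι ℂ (i, a) + FreeAlgebra.ι ℂ (i, b))
        (FreeAlgebra.ι ℂ (i, a + b))
  | mul (i : Fin n) (a b : A) :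
      FreePowRel A n (FreeAlgebra.ι ℂ (i, a) * FreeAlgebra.ι ℂ (i, b))
        (FreeAlgebra.ι ℂ (i, a * b))
  | smul (i : Fin n) (c : ℂ) (a : A) :
      FreePowRel A n (c • FreeAlgebra.ι ℂ (i, a)) (FreeAlgebra.ι ℂ (i, c • a))
  | one (i : Fin n) : FreePowRel A n (FreeAlgebra.ι ℂ (i, (1 : A))) 1

/-- The `n`-fold free product `A^{*n}`. -/
abbrev FreePow (A : Type) [Ring A] [Algebra ℂ A] (n : ℕ) : Type := RingQuot (FreePowRel A n)

/-- The canonical morphism `ν_i : A → A^{*n}` (as a function). -/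
def nu (A : Type) [Ring A] [Algebra ℂ A] (n : ℕ) (i : Fin n) (a : A) : FreePow A n :=
  RingQuot.mkAlgHom ℂ (FreePowRel A n) (FreeAlgebra.ι ℂ (i, a))


section Aux

variable {A : Type} [Ring A] [Algebra ℂ A] {n : ℕ}

lemma qx_row_mul (i j k : Fin n) :
    qx n i j * qx n i k = if j = k then qx n i j else 0 := by
  have h := RingQuot.mkAlgHom_rel ℂ (QPermRel.row i j k)
  simpa [qx, map_mul, apply_ite (RingQuot.mkAlgHom ℂ (QPermRel n))] using h

lemma qx_row_sum (i : Fin n) : ∑ l : Fin n, qx n i l = 1 := by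
  have h := RingQuot.mkAlgHom_rel ℂ (QPermRel.rowSum i)
  simpa [qx, map_sum] using h

lemma nu_add (i : Fin n) (a b : A) : nu A n i a + nu A n i b = nu A n i (a + b) := by
  have h := RingQuot.mkAlgHom_rel ℂ (FreePowRel.add i a b)
  simpa [nu, map_add] using h

lemma nu_mul (i : Fin n) (a b : A) : nu A n i a * nu A n i b = nu A n i (a * b) := by
  have h := RingQuot.mkAlgHom_rel ℂ (FreePowRel.mul i a b)
  simpa [nu, map_mul] using h

lemma nu_smul (i : Fin n) (c : ℂ) (a : A) : c • nu A n i a = nu A n i (c • a) := by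
  have h := RingQuot.mkAlgHom_rel ℂ (FreePowRel.smul i c a)
  simpa [nu, map_smul] using h

lemma nu_one (i : Fin n) : nu A n i (1 : A) = 1 := by
  have h := RingQuot.mkAlgHom_rel ℂ (FreePowRel.one (A := A) i)
  simpa [nu, map_one] using h

lemma freePow_hom_ext {B : Type} [Semiring B] [Algebra ℂ B]
    {φ ψ : FreePow A n →ₐ[ℂ] B}
    (h : ∀ (i : Fin n) (a : A), φ (nu A n i a) = ψ (nu A n i a)) : φ = ψ := by
  have h2 : φ.comp (RingQuot.mkAlgHom ℂ (FreePowRel A n)) =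
      ψ.comp (RingQuot.mkAlgHom ℂ (FreePowRel A n)) := by
    apply FreeAlgebra.hom_ext
    funext p
    exact h p.1 p.2
  refine AlgHom.ext fun x => ?_
  obtain ⟨y, rfl⟩ := RingQuot.mkAlgHom_surjective ℂ (FreePowRel A n) x
  exact DFunLike.congr_fun h2 y

end Aux

/-- Let `A` be a unital `ℂ`-algebra and `n ≥ 1`.  There is a unique algebra
homomorphism `α : A^{*n} → 𝒜_t(n) ⊗ A^{*n}` with `α(ν_i(a)) = Σ_k x_{ik} ⊗ ν_k(a)`, and `α`
is a coaction making `A^{*n}` a left `𝒜_t(n)`-comodule algebra: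
`(Δ ⊗ id)∘α = (id ⊗ α)∘α` and `(ε ⊗ id)∘α = id`, where `Δ` and `ε` are the
comultiplication and counit of `𝒜_t(n)` (characterized by their values on the `x_{ij}`). -/
theorem stmt_1 (A : Type) [Ring A] [Algebra ℂ A] (n : ℕ) (hn : 1 ≤ n)
    (Δ : QPerm n →ₐ[ℂ] (QPerm n ⊗[ℂ] QPerm n))
    (hΔ : ∀ i j : Fin n, Δ (qx n i j) = ∑ k : Fin n, qx n i k ⊗ₜ[ℂ] qx n k j)
    (ε : QPerm n →ₐ[ℂ] ℂ)
    (hε : ∀ i j : Fin n, ε (qx n i j) = if i = j then 1 else 0) :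
    ∃ α : FreePow A n →ₐ[ℂ] (QPerm n ⊗[ℂ] FreePow A n),
      (∀ (i : Fin n) (a : A), α (nu A n i a) = ∑ k : Fin n, qx n i k ⊗ₜ[ℂ] nu A n k a) ∧
      (∀ α' : FreePow A n →ₐ[ℂ] (QPerm n ⊗[ℂ] FreePow A n),
        (∀ (i : Fin n) (a : A), α' (nu A n i a) = ∑ k : Fin n, qx n i k ⊗ₜ[ℂ] nu A n k a) →
        α' = α) ∧
      (∀ h : FreePow A n,
        (Algebra.TensorProduct.assoc ℂ ℂ ℂ (QPerm n) (QPerm n) (FreePow A n))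
            ((Algebra.TensorProduct.map Δ (AlgHom.id ℂ (FreePow A n))) (α h)) =
          (Algebra.TensorProduct.map (AlgHom.id ℂ (QPerm n)) α) (α h)) ∧
      (∀ h : FreePow A n,
        (Algebra.TensorProduct.lid ℂ (FreePow A n))
            ((Algebra.TensorProduct.map ε (AlgHom.id ℂ (FreePow A n))) (α h)) = h) := by
  classical
  -- construct α
  set f : FreeAlgebra ℂ (Fin n × A) →ₐ[ℂ] (QPerm n ⊗[ℂ] FreePow A n) :=
    FreeAlgebra.lift ℂ (fun p : Fin n × A => ∑ k : Fin n, qx n p.1 k ⊗ₜ[ℂ] nu A n k p.2)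
    with hf
  have hfι : ∀ (i : Fin n) (a : A),
      f (FreeAlgebra.ι ℂ (i, a)) = ∑ k : Fin n, qx n i k ⊗ₜ[ℂ] nu A n k a := by
    intro i a
    simp [hf]
  have hrel : ∀ ⦃x y : FreeAlgebra ℂ (Fin n × A)⦄, FreePowRel A n x y → f x = f y := by
    intro x y hxy
    induction hxy with
    | add i a b =>
        simp only [map_add, hfι, ← Finset.sum_add_distrib, ← TensorProduct.tmul_add, nu_add]
    | mul i a b =>
        simp only [map_mul, hfι, Finset.sum_mul_sum,
          Algebra.TensorProduct.tmul_mul_tmul, qx_row_mul]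
        rw [Finset.sum_comm]
        simp [TensorProduct.ite_tmul, nu_mul]
    | smul i c a =>
        simp only [map_smul, hfι, Finset.smul_sum, ← nu_smul, ← TensorProduct.smul_tmul]
        simp [TensorProduct.smul_tmul]
    | one i =>
        rw [hfι]
        simp only [nu_one]
        rw [← TensorProduct.sum_tmul, qx_row_sum]
        simp [Algebra.TensorProduct.one_def]
  set α : FreePow A n →ₐ[ℂ] (QPerm n ⊗[ℂ] FreePow A n) :=
    RingQuot.liftAlgHom ℂ ⟨f, hrel⟩ with hα
  have hαnu : ∀ (i : Fin n) (a : A),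
      α (nu A n i a) = ∑ k : Fin n, qx n i k ⊗ₜ[ℂ] nu A n k a := by
    intro i a
    rw [hα, nu, RingQuot.liftAlgHom_mkAlgHom_apply, hfι]
  refine ⟨α, hαnu, ?_, ?_, ?_⟩
  · intro α' hα'
    exact freePow_hom_ext fun i a => by rw [hα' i a, hαnu i a]
  · intro h
    have key : ((Algebra.TensorProduct.assoc ℂ ℂ ℂ (QPerm n) (QPerm n) (FreePow A n)).toAlgHom.comp
          ((Algebra.TensorProduct.map Δ (AlgHom.id ℂ (FreePow A n))).comp α)) =
        ((Algebra.TensorProduct.map (AlgHom.id ℂ (QPerm n)) α).comp α) := by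
      apply freePow_hom_ext
      intro i a
      simp only [AlgHom.comp_apply, hαnu, map_sum, Algebra.TensorProduct.map_tmul,
        AlgHom.coe_id, id_eq, hΔ, TensorProduct.sum_tmul, AlgEquiv.toAlgHom_eq_coe,
        AlgHom.coe_coe, AlgEquiv.coe_toAlgHom, Algebra.TensorProduct.assoc_tmul, TensorProduct.tmul_sum]
      rw [Finset.sum_comm]
    exact DFunLike.congr_fun key h
  · intro h
    have key : ((Algebra.TensorProduct.lid ℂ (FreePow A n)).toAlgHom.comp
          ((Algebra.TensorProduct.map ε (AlgHom.id ℂ (FreePow A n))).comp α)) =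
        AlgHom.id ℂ (FreePow A n) := by
      apply freePow_hom_ext
      intro i a
      simp only [AlgHom.comp_apply, hαnu, map_sum, Algebra.TensorProduct.map_tmul,
        AlgHom.coe_id, id_eq, hε, AlgEquiv.toAlgHom_eq_coe, AlgHom.coe_coe,
        Algebra.TensorProduct.lid_tmul]
      simp [ite_smul]
    exact DFunLike.congr_fun key h
end
end

section
/- Let A be a Hopf *-algebra over ℂ (a Hopf algebra equipped with a conjugate-linear involutive anti-automorphism a ↦ a* for which Δ and ε are *-homomorphisms) and n ≥ 1. Then the free wreath product ℋ = A *_w 𝒜_t(n) carries a *-algebra structure satisfying x_{ij}* = x_{ij} and ν_i(a)* = ν_i(a*) for all 1 ≤ i,j ≤ n and a ∈ A, and with the Hopf algebra structure of the free wreath product (Δ(x_{ij}) = Σ_k x_{ik} ⊗ x_{kj}, Δ(ν_i(a)) = Σ_k ν_i(a_{(1)})x_{ik} ⊗ ν_k(a_{(2)})) the comultiplication Δ and counit ε of ℋ are *-homomorphisms, so ℋ is a Hopf *-algebra. -/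
open scoped TensorProduct

noncomputable section

/-- Relations presenting the free wreath product `A *_w 𝒜_t(n)`.
Generators: `Sum.inl (i, a)` is `ν_i(a)`, `Sum.inr (i, j)` is `x_{ij}`. -/
inductive FWRel (A : Type) [Ring A] [Algebra ℂ A] (n : ℕ) :
    FreeAlgebra ℂ ((Fin n × A) ⊕ (Fin n × Fin n)) →
      FreeAlgebra ℂ ((Fin n × A) ⊕ (Fin n × Fin n)) → Prop
  | nu_add (i : Fin n) (a b : A) :
      FWRel A n (FreeAlgebra.ι ℂ (Sum.inl (i, a)) + FreeAlgebra.ι ℂ (Sum.inl (i, b)))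
        (FreeAlgebra.ι ℂ (Sum.inl (i, a + b)))
  | nu_mul (i : Fin n) (a b : A) :
      FWRel A n (FreeAlgebra.ι ℂ (Sum.inl (i, a)) * FreeAlgebra.ι ℂ (Sum.inl (i, b)))
        (FreeAlgebra.ι ℂ (Sum.inl (i, a * b)))
  | nu_smul (i : Fin n) (c : ℂ) (a : A) :
      FWRel A n (c • FreeAlgebra.ι ℂ (Sum.inl (i, a))) (FreeAlgebra.ι ℂ (Sum.inl (i, c • a)))
  | nu_one (i : Fin n) : FWRel A n (FreeAlgebra.ι ℂ (Sum.inl (i, (1 : A)))) 1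
  | x_row (i j k : Fin n) :
      FWRel A n (FreeAlgebra.ι ℂ (Sum.inr (i, j)) * FreeAlgebra.ι ℂ (Sum.inr (i, k)))
        (if j = k then FreeAlgebra.ι ℂ (Sum.inr (i, j)) else 0)
  | x_col (i j k : Fin n) :
      FWRel A n (FreeAlgebra.ι ℂ (Sum.inr (j, i)) * FreeAlgebra.ι ℂ (Sum.inr (k, i)))
        (if j = k then FreeAlgebra.ι ℂ (Sum.inr (j, i)) else 0)
  | x_rowSum (i : Fin n) : FWRel A n (∑ l : Fin n, FreeAlgebra.ι ℂ (Sum.inr (i, l))) 1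
  | x_colSum (i : Fin n) : FWRel A n (∑ l : Fin n, FreeAlgebra.ι ℂ (Sum.inr (l, i))) 1
  | comm (i k : Fin n) (a : A) :
      FWRel A n (FreeAlgebra.ι ℂ (Sum.inl (k, a)) * FreeAlgebra.ι ℂ (Sum.inr (k, i)))
        (FreeAlgebra.ι ℂ (Sum.inr (k, i)) * FreeAlgebra.ι ℂ (Sum.inl (k, a)))

/-- The free wreath product `A *_w 𝒜_t(n)`. -/
abbrev FW (A : Type) [Ring A] [Algebra ℂ A] (n : ℕ) : Type := RingQuot (FWRel A n)

/-- The image of `ν_i(a)` in `A *_w 𝒜_t(n)`. -/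
def wnu (A : Type) [Ring A] [Algebra ℂ A] (n : ℕ) (i : Fin n) (a : A) : FW A n :=
  RingQuot.mkAlgHom ℂ (FWRel A n) (FreeAlgebra.ι ℂ (Sum.inl (i, a)))

/-- The image of `x_{ij}` in `A *_w 𝒜_t(n)`. -/
def wx (A : Type) [Ring A] [Algebra ℂ A] (n : ℕ) (i j : Fin n) : FW A n :=
  RingQuot.mkAlgHom ℂ (FWRel A n) (FreeAlgebra.ι ℂ (Sum.inr (i, j)))

/-- `ν_i` as a `ℂ`-linear map `A →ₗ[ℂ] A *_w 𝒜_t(n)`. -/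
def wnuL (A : Type) [Ring A] [Algebra ℂ A] (n : ℕ) (i : Fin n) : A →ₗ[ℂ] FW A n where
  toFun := wnu A n i
  map_add' a b := by
    have h := RingQuot.mkAlgHom_rel ℂ (FWRel.nu_add (A := A) (n := n) i a b)
    simp only [map_add] at h
    exact h.symm
  map_smul' c a := by
    have h := RingQuot.mkAlgHom_rel ℂ (FWRel.nu_smul (A := A) (n := n) i c a)
    simp only [map_smul] at h
    simpa [wnu] using h.symm

section StarAux

variable (A : Type) [Ring A] [Algebra ℂ A] (n : ℕ)

lemma wnu_add' (i : Fin n) (a b : A) : wnu A n i a + wnu A n i b = wnu A n i (a + b) := by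
  have h := RingQuot.mkAlgHom_rel ℂ (FWRel.nu_add (A := A) (n := n) i a b)
  simpa [wnu, map_add] using h

lemma wnu_smul' (i : Fin n) (c : ℂ) (a : A) : c • wnu A n i a = wnu A n i (c • a) := by
  have h := RingQuot.mkAlgHom_rel ℂ (FWRel.nu_smul (A := A) (n := n) i c a)
  simpa [wnu, map_smul] using h

lemma wnu_mul' (i : Fin n) (a b : A) : wnu A n i a * wnu A n i b = wnu A n i (a * b) := by
  have h := RingQuot.mkAlgHom_rel ℂ (FWRel.nu_mul (A := A) (n := n) i a b)
  simpa [wnu, map_mul] using h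

lemma wnu_one' (i : Fin n) : wnu A n i 1 = 1 := by
  have h := RingQuot.mkAlgHom_rel ℂ (FWRel.nu_one (A := A) (n := n) i)
  simpa [wnu] using h

lemma wx_row' (i j k : Fin n) :
    wx A n i j * wx A n i k = if j = k then wx A n i j else 0 := by
  have h := RingQuot.mkAlgHom_rel ℂ (FWRel.x_row (A := A) (n := n) i j k)
  simp only [map_mul, apply_ite (RingQuot.mkAlgHom ℂ (FWRel A n)), map_zero] at h
  simpa [wx] using h

lemma wx_col' (i j k : Fin n) :
    wx A n j i * wx A n k i = if j = k then wx A n j i else 0 := by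
  have h := RingQuot.mkAlgHom_rel ℂ (FWRel.x_col (A := A) (n := n) i j k)
  simp only [map_mul, apply_ite (RingQuot.mkAlgHom ℂ (FWRel A n)), map_zero] at h
  simpa [wx] using h

lemma wx_rowSum' (i : Fin n) : (∑ l : Fin n, wx A n i l) = 1 := by
  have h := RingQuot.mkAlgHom_rel ℂ (FWRel.x_rowSum (A := A) (n := n) i)
  simpa [wx, map_sum] using h

lemma wx_colSum' (i : Fin n) : (∑ l : Fin n, wx A n l i) = 1 := by
  have h := RingQuot.mkAlgHom_rel ℂ (FWRel.x_colSum (A := A) (n := n) i)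
  simpa [wx, map_sum] using h

lemma w_comm (i k : Fin n) (a : A) :
    wnu A n k a * wx A n k i = wx A n k i * wnu A n k a := by
  have h := RingQuot.mkAlgHom_rel ℂ (FWRel.comm (A := A) (n := n) i k a)
  simpa [wnu, wx, map_mul] using h

/-- `FW A n` with the conjugated `ℂ`-algebra structure. -/
def CFW : Type := FW A n

instance : Ring (CFW A n) := inferInstanceAs (Ring (FW A n))

noncomputable instance : Algebra ℂ (CFW A n) :=
  RingHom.toAlgebra'
    (((algebraMap ℂ (FW A n)).comp (starRingEnd ℂ) : ℂ →+* FW A n) : ℂ →+* CFW A n)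
    (fun c x => Algebra.commutes (A := FW A n) ((starRingEnd ℂ) c) x)

/-- The identity, as a ring hom from the conjugated structure back to `FW A n`. -/
def toFW : CFW A n →+* FW A n := RingHom.id (FW A n)

@[simp] lemma toFW_algebraMap (c : ℂ) :
    toFW A n (algebraMap ℂ (CFW A n) c) = algebraMap ℂ (FW A n) (starRingEnd ℂ c) := rfl

lemma toFW_smul (c : ℂ) (u : CFW A n) :
    toFW A n (c • u) = starRingEnd ℂ c • toFW A n u := by
  rw [Algebra.smul_def, map_mul, toFW_algebraMap, Algebra.smul_def]

variable [StarRing A] [StarModule ℂ A]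

/-- Images of the generators under the star anti-homomorphism. -/
def phiGen : (Fin n × A) ⊕ (Fin n × Fin n) → CFW A n
  | Sum.inl (i, a) => (wnu A n i (star a) : FW A n)
  | Sum.inr (i, j) => (wx A n i j : FW A n)

noncomputable def phi : FreeAlgebra ℂ ((Fin n × A) ⊕ (Fin n × Fin n)) →ₐ[ℂ] CFW A n :=
  FreeAlgebra.lift ℂ (phiGen A n)

@[simp] lemma phi_inl (i : Fin n) (a : A) :
    toFW A n (phi A n (FreeAlgebra.ι ℂ (Sum.inl (i, a)))) = wnu A n i (star a) := by
  simp only [phi, FreeAlgebra.lift_ι_apply]; rfl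

@[simp] lemma phi_inr (i j : Fin n) :
    toFW A n (phi A n (FreeAlgebra.ι ℂ (Sum.inr (i, j)))) = wx A n i j := by
  simp only [phi, FreeAlgebra.lift_ι_apply]; rfl

lemma fa_star_smul (c : ℂ) (x : FreeAlgebra ℂ ((Fin n × A) ⊕ (Fin n × Fin n))) :
    star (c • x) = c • star x := by
  rw [Algebra.smul_def, star_mul, FreeAlgebra.star_algebraMap, ← Algebra.commutes,
    ← Algebra.smul_def]

noncomputable def psi : FreeAlgebra ℂ ((Fin n × A) ⊕ (Fin n × Fin n)) →+* (FW A n)ᵐᵒᵖ where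
  toFun y := MulOpposite.op (toFW A n (phi A n (star y)))
  map_one' := by simp
  map_mul' x y := by simp [star_mul, map_mul]
  map_zero' := by simp
  map_add' x y := by simp [star_add, map_add]

lemma psi_apply (y : FreeAlgebra ℂ ((Fin n × A) ⊕ (Fin n × Fin n))) :
    psi A n y = MulOpposite.op (toFW A n (phi A n (star y))) := rfl

lemma psi_rel : ∀ ⦃x y⦄, FWRel A n x y → psi A n x = psi A n y := by
  intro x y h
  rw [psi_apply, psi_apply]
  refine congrArg MulOpposite.op ?_
  induction h with
  | nu_add i a b =>
      simp only [star_add, FreeAlgebra.star_ι, map_add, phi_inl]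
      rw [wnu_add', ← star_add]
  | nu_mul i a b =>
      simp only [star_mul, FreeAlgebra.star_ι, map_mul, phi_inl]
      rw [wnu_mul', ← star_mul]
  | nu_smul i c a =>
      simp only [fa_star_smul, map_smul, toFW_smul, FreeAlgebra.star_ι, phi_inl]
      rw [wnu_smul', star_smul, starRingEnd_apply]
  | nu_one i =>
      simp only [FreeAlgebra.star_ι, phi_inl, star_one, map_one]
      rw [wnu_one']
  | x_row i j k =>
      by_cases hjk : j = k
      · subst hjk
        rw [if_pos rfl]
        simp only [star_mul, map_mul, FreeAlgebra.star_ι, phi_inr]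
        rw [wx_row', if_pos rfl]
      · rw [if_neg hjk]
        simp only [star_mul, map_mul, FreeAlgebra.star_ι, phi_inr, star_zero, map_zero]
        rw [wx_row', if_neg (fun hh => hjk hh.symm)]
  | x_col i j k =>
      by_cases hjk : j = k
      · subst hjk
        rw [if_pos rfl]
        simp only [star_mul, map_mul, FreeAlgebra.star_ι, phi_inr]
        rw [wx_col', if_pos rfl]
      · rw [if_neg hjk]
        simp only [star_mul, map_mul, FreeAlgebra.star_ι, phi_inr, star_zero, map_zero]
        rw [wx_col', if_neg (fun hh => hjk hh.symm)]
  | x_rowSum i =>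
      simp only [star_sum, map_sum, FreeAlgebra.star_ι, phi_inr, star_one, map_one]
      exact wx_rowSum' A n i
  | x_colSum i =>
      simp only [star_sum, map_sum, FreeAlgebra.star_ι, phi_inr, star_one, map_one]
      exact wx_colSum' A n i
  | comm i k a =>
      simp only [star_mul, map_mul, FreeAlgebra.star_ι, phi_inl, phi_inr]
      exact (w_comm A n i k (star a)).symm

noncomputable def PsiOp : FW A n →+* (FW A n)ᵐᵒᵖ :=
  RingQuot.lift ⟨psi A n, psi_rel A n⟩

/-- The star operation on `FW A n`, as an additive map. -/
noncomputable def fwStar : FW A n →+ FW A n where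
  toFun h := MulOpposite.unop (PsiOp A n h)
  map_zero' := by simp
  map_add' x y := by simp

lemma fwStar_mk (y : FreeAlgebra ℂ ((Fin n × A) ⊕ (Fin n × Fin n))) :
    fwStar A n (RingQuot.mkAlgHom ℂ (FWRel A n) y) = toFW A n (phi A n (star y)) := by
  have h1 : RingQuot.mkAlgHom ℂ (FWRel A n) y = RingQuot.mkRingHom (FWRel A n) y := by
    rw [← RingQuot.mkAlgHom_coe ℂ (FWRel A n)]; rfl
  show MulOpposite.unop (PsiOp A n _) = _
  rw [h1]
  rw [PsiOp, RingQuot.lift_mkRingHom_apply, psi_apply, MulOpposite.unop_op]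

@[simp] lemma fwStar_wnu (i : Fin n) (a : A) :
    fwStar A n (wnu A n i a) = wnu A n i (star a) := by
  show fwStar A n (RingQuot.mkAlgHom ℂ (FWRel A n) (FreeAlgebra.ι ℂ (Sum.inl (i, a)))) = _
  rw [fwStar_mk, FreeAlgebra.star_ι, phi_inl]

@[simp] lemma fwStar_wx (i j : Fin n) : fwStar A n (wx A n i j) = wx A n i j := by
  show fwStar A n (RingQuot.mkAlgHom ℂ (FWRel A n) (FreeAlgebra.ι ℂ (Sum.inr (i, j)))) = _
  rw [fwStar_mk, FreeAlgebra.star_ι, phi_inr]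

lemma fwStar_mul (a b : FW A n) : fwStar A n (a * b) = fwStar A n b * fwStar A n a := by
  show MulOpposite.unop (PsiOp A n _) = _
  rw [map_mul]
  rfl

@[simp] lemma fwStar_one : fwStar A n 1 = 1 := by
  show MulOpposite.unop (PsiOp A n 1) = 1
  rw [map_one]
  rfl

@[simp] lemma fwStar_algebraMap (c : ℂ) :
    fwStar A n (algebraMap ℂ (FW A n) c) = algebraMap ℂ (FW A n) (starRingEnd ℂ c) := by
  have h : algebraMap ℂ (FW A n) c
      = RingQuot.mkAlgHom ℂ (FWRel A n) (algebraMap ℂ _ c) :=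
    (AlgHom.commutes _ c).symm
  rw [h, fwStar_mk, FreeAlgebra.star_algebraMap, AlgHom.commutes, toFW_algebraMap]

lemma fwStar_smul (c : ℂ) (h : FW A n) :
    fwStar A n (c • h) = starRingEnd ℂ c • fwStar A n h := by
  rw [Algebra.smul_def, fwStar_mul, fwStar_algebraMap, ← Algebra.commutes, ← Algebra.smul_def]

lemma fwStar_invol (h : FW A n) : fwStar A n (fwStar A n h) = h := by
  obtain ⟨y, rfl⟩ := RingQuot.mkAlgHom_surjective ℂ (FWRel A n) h
  induction y using FreeAlgebra.induction with
  | grade0 c =>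
      rw [AlgHom.commutes, fwStar_algebraMap, fwStar_algebraMap]
      simp
  | grade1 g =>
      rcases g with ⟨i, a⟩ | ⟨i, j⟩
      · show fwStar A n (fwStar A n (wnu A n i a)) = wnu A n i a
        rw [fwStar_wnu, fwStar_wnu, star_star]
      · show fwStar A n (fwStar A n (wx A n i j)) = wx A n i j
        rw [fwStar_wx, fwStar_wx]
  | mul x y hx hy =>
      rw [map_mul, fwStar_mul, fwStar_mul, hx, hy]
  | add x y hx hy =>
      rw [map_add, map_add, map_add, hx, hy]

end StarAux

set_option maxHeartbeats 1600000 in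
/-- If `A` is a Hopf `*`-algebra over `ℂ` (a Hopf algebra with a
conjugate-linear involutive anti-automorphism `star` for which the comultiplication and
counit are `*`-homomorphisms) and `n ≥ 1`, then `ℋ = A *_w 𝒜_t(n)` carries a `*`-algebra
structure with `x_{ij}* = x_{ij}` and `ν_i(a)* = ν_i(a*)`, for which the comultiplication
and counit of the free wreath product Hopf structure are `*`-homomorphisms (on the tensor
square, `star` acts by `(x ⊗ y)* = x* ⊗ y*`). -/
theorem stmt_3 (A : Type) [Ring A] [HopfAlgebra ℂ A] [StarRing A] [StarModule ℂ A]
    -- `Δ_A` is a `*`-homomorphism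
    (hAcomul : ∀ sTA : A ⊗[ℂ] A →+ A ⊗[ℂ] A,
      (∀ a b : A, sTA (a ⊗ₜ[ℂ] b) = star a ⊗ₜ[ℂ] star b) →
      ∀ a : A, Coalgebra.comul (R := ℂ) (star a) = sTA (Coalgebra.comul (R := ℂ) a))
    -- `ε_A` is a `*`-homomorphism
    (hAcounit : ∀ a : A,
      Coalgebra.counit (R := ℂ) (star a) = star (Coalgebra.counit (R := ℂ) a))
    (n : ℕ) (hn : 1 ≤ n)
    -- the comultiplication of the free wreath product Hopf structure
    (Δ : FW A n →ₐ[ℂ] (FW A n ⊗[ℂ] FW A n))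
    (hΔx : ∀ i j : Fin n, Δ (wx A n i j) = ∑ k : Fin n, wx A n i k ⊗ₜ[ℂ] wx A n k j)
    (hΔnu : ∀ (i : Fin n) (a : A),
      Δ (wnu A n i a) =
        ∑ k : Fin n,
          (TensorProduct.map ((LinearMap.mulRight ℂ (wx A n i k)).comp (wnuL A n i))
            (wnuL A n k)) (Coalgebra.comul (R := ℂ) a))
    -- the counit of the free wreath product Hopf structure
    (ε : FW A n →ₐ[ℂ] ℂ)
    (hεx : ∀ i j : Fin n, ε (wx A n i j) = if i = j then 1 else 0)
    (hεnu : ∀ (i : Fin n) (a : A), ε (wnu A n i a) = Coalgebra.counit (R := ℂ) a) :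
    ∃ star' : FW A n →+ FW A n,
      -- `star'` is a conjugate-linear involutive anti-automorphism
      (∀ (c : ℂ) (h : FW A n), star' (c • h) = (starRingEnd ℂ) c • star' h) ∧
      (∀ h : FW A n, star' (star' h) = h) ∧
      (∀ a b : FW A n, star' (a * b) = star' b * star' a) ∧
      (star' 1 = 1) ∧
      -- values on the generators
      (∀ i j : Fin n, star' (wx A n i j) = wx A n i j) ∧
      (∀ (i : Fin n) (a : A), star' (wnu A n i a) = wnu A n i (star a)) ∧
      -- `Δ` is a `*`-homomorphism
      (∀ sT : FW A n ⊗[ℂ] FW A n →+ FW A n ⊗[ℂ] FW A n,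
        (∀ a b : FW A n, sT (a ⊗ₜ[ℂ] b) = star' a ⊗ₜ[ℂ] star' b) →
        ∀ h : FW A n, Δ (star' h) = sT (Δ h)) ∧
      -- `ε` is a `*`-homomorphism
      (∀ h : FW A n, ε (star' h) = star (ε h)) := by
  classical
  refine ⟨fwStar A n, fwStar_smul A n, fwStar_invol A n, fwStar_mul A n, fwStar_one A n,
    fwStar_wx A n, fwStar_wnu A n, ?_, ?_⟩
  · -- Δ is a *-homomorphism
    intro sT hsT h
    -- the star map on `A ⊗ A`
    let sTA : A ⊗[ℂ] A →+ A ⊗[ℂ] A :=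
      TensorProduct.liftAddHom
        { toFun := fun a =>
            { toFun := fun b => star a ⊗ₜ[ℂ] star b
              map_zero' := by simp
              map_add' := fun b c => by simp [star_add, TensorProduct.tmul_add] }
          map_zero' := by ext b; simp
          map_add' := fun a c => by ext b; simp [star_add, TensorProduct.add_tmul] }
        (fun c a b => by
          simp only [AddMonoidHom.coe_mk, ZeroHom.coe_mk]
          rw [star_smul, star_smul, TensorProduct.smul_tmul])
    have hTAtmul : ∀ a b : A, sTA (a ⊗ₜ[ℂ] b) = star a ⊗ₜ[ℂ] star b := fun a b => rfl
    have hcms : ∀ a : A,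
        Coalgebra.comul (R := ℂ) (star a) = sTA (Coalgebra.comul (R := ℂ) a) :=
      hAcomul sTA hTAtmul
    -- `sT` is anti-multiplicative
    have hsTmul : ∀ u v : FW A n ⊗[ℂ] FW A n, sT (u * v) = sT v * sT u := by
      intro u v
      induction u using TensorProduct.induction_on with
      | zero => simp
      | tmul a b =>
        induction v using TensorProduct.induction_on with
        | zero => simp
        | tmul c d =>
          rw [Algebra.TensorProduct.tmul_mul_tmul, hsT, hsT, hsT, fwStar_mul, fwStar_mul,
            Algebra.TensorProduct.tmul_mul_tmul]
        | add v1 v2 h1 h2 => simp only [mul_add, add_mul, map_add, h1, h2]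
      | add u1 u2 h1 h2 => simp only [mul_add, add_mul, map_add, h1, h2]
    -- compatibility of `sTA` and `sT` with the maps appearing in `Δ(ν_i(a))`
    have hTk : ∀ (i k : Fin n) (u : A ⊗[ℂ] A),
        (TensorProduct.map ((LinearMap.mulRight ℂ (wx A n i k)).comp (wnuL A n i)) (wnuL A n k))
            (sTA u)
          = sT ((TensorProduct.map ((LinearMap.mulRight ℂ (wx A n i k)).comp (wnuL A n i))
              (wnuL A n k)) u) := by
      intro i k u
      induction u using TensorProduct.induction_on with
      | zero => simp
      | tmul a b =>
        rw [hTAtmul]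
        simp only [TensorProduct.map_tmul, LinearMap.coe_comp, Function.comp_apply,
          LinearMap.mulRight_apply, hsT]
        show (wnu A n i (star a) * wx A n i k) ⊗ₜ[ℂ] wnu A n k (star b)
            = fwStar A n (wnu A n i a * wx A n i k) ⊗ₜ[ℂ] fwStar A n (wnu A n k b)
        rw [fwStar_mul, fwStar_wx, fwStar_wnu, fwStar_wnu, w_comm]
      | add u1 u2 h1 h2 => simp only [map_add, h1, h2]
    obtain ⟨y, rfl⟩ := RingQuot.mkAlgHom_surjective ℂ (FWRel A n) h
    induction y using FreeAlgebra.induction with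
    | grade0 c =>
        simp only [AlgHom.commutes, fwStar_algebraMap]
        rw [Algebra.TensorProduct.algebraMap_apply, Algebra.TensorProduct.algebraMap_apply,
          hsT, fwStar_algebraMap, fwStar_one]
    | grade1 g =>
        rcases g with ⟨i, a⟩ | ⟨i, j⟩
        · show Δ (fwStar A n (wnu A n i a)) = sT (Δ (wnu A n i a))
          rw [fwStar_wnu, hΔnu i (star a), hΔnu i a, hcms a, map_sum]
          exact Finset.sum_congr rfl fun k _ => hTk i k _
        · show Δ (fwStar A n (wx A n i j)) = sT (Δ (wx A n i j))
          rw [fwStar_wx, hΔx, map_sum]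
          refine Finset.sum_congr rfl fun k _ => ?_
          rw [hsT, fwStar_wx, fwStar_wx]
    | mul x y hx hy =>
        calc Δ (fwStar A n (RingQuot.mkAlgHom ℂ (FWRel A n) (x * y)))
            = Δ (fwStar A n (RingQuot.mkAlgHom ℂ (FWRel A n) y))
                * Δ (fwStar A n (RingQuot.mkAlgHom ℂ (FWRel A n) x)) := by
              rw [map_mul (RingQuot.mkAlgHom ℂ (FWRel A n)), fwStar_mul, map_mul Δ]
          _ = sT (Δ (RingQuot.mkAlgHom ℂ (FWRel A n) y))
                * sT (Δ (RingQuot.mkAlgHom ℂ (FWRel A n) x)) := by rw [hx, hy]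
          _ = sT (Δ (RingQuot.mkAlgHom ℂ (FWRel A n) x)
                * Δ (RingQuot.mkAlgHom ℂ (FWRel A n) y)) := (hsTmul _ _).symm
          _ = sT (Δ (RingQuot.mkAlgHom ℂ (FWRel A n) (x * y))) := by
              rw [map_mul (RingQuot.mkAlgHom ℂ (FWRel A n)), map_mul Δ]
    | add x y hx hy =>
        simp only [map_add]
        rw [hx, hy]
  · -- ε is a *-homomorphism
    intro h
    obtain ⟨y, rfl⟩ := RingQuot.mkAlgHom_surjective ℂ (FWRel A n) h
    induction y using FreeAlgebra.induction with
    | grade0 c =>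
        simp only [AlgHom.commutes, fwStar_algebraMap, Algebra.algebraMap_self, RingHom.id_apply,
          starRingEnd_apply]
    | grade1 g =>
        rcases g with ⟨i, a⟩ | ⟨i, j⟩
        · show ε (fwStar A n (wnu A n i a)) = star (ε (wnu A n i a))
          rw [fwStar_wnu, hεnu, hεnu]
          exact hAcounit a
        · show ε (fwStar A n (wx A n i j)) = star (ε (wx A n i j))
          rw [fwStar_wx, hεx]
          simp [apply_ite (star : ℂ → ℂ)]
    | mul x y hx hy =>
        rw [map_mul (RingQuot.mkAlgHom ℂ (FWRel A n))]
        rw [fwStar_mul, map_mul ε, hx, hy, ← star_mul, ← map_mul ε]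
    | add x y hx hy =>
        rw [map_add (RingQuot.mkAlgHom ℂ (FWRel A n)), map_add (fwStar A n), map_add ε,
          map_add ε, hx, hy, star_add]
end
end

section
/- Let G be a group and n ≥ 1. The universal algebra 𝒜_n(G) admits a Hopf *-algebra structure over ℂ determined on generators by: a_{ij}(g)* = a_{ij}(g^{-1}), Δ(a_{ij}(g)) = Σ_{k=1}^n a_{ik}(g) ⊗ a_{kj}(g), ε(a_{ij}(g)) = δ_{ij}, and S(a_{ij}(g)) = a_{ji}(g^{-1}), for all 1 ≤ i,j ≤ n and g ∈ G; here Δ and ε are algebra homomorphisms, S is an algebra anti-homomorphism, Δ is coassociative with counit ε, and S satisfies the antipode identities m∘(S⊗id)∘Δ = η∘ε = m∘(id⊗S)∘Δ. -/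
open scoped TensorProduct

noncomputable section

/-- Relations of the universal algebra `𝒜_n(G)`: generators `a_{ij}(g)`. -/
inductive AnGRel (G : Type) [Group G] (n : ℕ) :
    FreeAlgebra ℂ (Fin n × Fin n × G) → FreeAlgebra ℂ (Fin n × Fin n × G) → Prop
  | row (i j k : Fin n) (g h : G) :
      AnGRel G n (FreeAlgebra.ι ℂ (i, j, g) * FreeAlgebra.ι ℂ (i, k, h))
        (if j = k then FreeAlgebra.ι ℂ (i, j, g * h) else 0)
  | col (i j k : Fin n) (g h : G) :
      AnGRel G n (FreeAlgebra.ι ℂ (j, i, g) * FreeAlgebra.ι ℂ (k, i, h))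
        (if j = k then FreeAlgebra.ι ℂ (j, i, g * h) else 0)
  | rowSum (i : Fin n) : AnGRel G n (∑ l : Fin n, FreeAlgebra.ι ℂ (i, l, (1 : G))) 1
  | colSum (i : Fin n) : AnGRel G n (∑ l : Fin n, FreeAlgebra.ι ℂ (l, i, (1 : G))) 1

/-- The universal algebra `𝒜_n(G)`. -/
abbrev AnG (G : Type) [Group G] (n : ℕ) : Type := RingQuot (AnGRel G n)

/-- The generators `a_{ij}(g)` of `𝒜_n(G)`. -/
def ag (G : Type) [Group G] (n : ℕ) (i j : Fin n) (g : G) : AnG G n :=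
  RingQuot.mkAlgHom ℂ (AnGRel G n) (FreeAlgebra.ι ℂ (i, j, g))

namespace AnGAux

open MulOpposite

variable (G : Type) [Group G] (n : ℕ)

def mk : FreeAlgebra ℂ (Fin n × Fin n × G) →ₐ[ℂ] AnG G n := RingQuot.mkAlgHom ℂ (AnGRel G n)

variable {G n}

lemma ag_eq (i j : Fin n) (g : G) : ag G n i j g = mk G n (FreeAlgebra.ι ℂ (i, j, g)) := rfl

lemma mk_rel {x y : FreeAlgebra ℂ (Fin n × Fin n × G)} (w : AnGRel G n x y) :
    mk G n x = mk G n y := RingQuot.mkAlgHom_rel ℂ w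

lemma ag_row (i j k : Fin n) (g h : G) :
    ag G n i j g * ag G n i k h = if j = k then ag G n i j (g * h) else 0 := by
  rw [ag_eq, ag_eq, ← map_mul, mk_rel (AnGRel.row i j k g h)]
  split_ifs <;> simp [ag_eq]

lemma ag_col (i j k : Fin n) (g h : G) :
    ag G n j i g * ag G n k i h = if j = k then ag G n j i (g * h) else 0 := by
  rw [ag_eq, ag_eq, ← map_mul, mk_rel (AnGRel.col i j k g h)]
  split_ifs <;> simp [ag_eq]

lemma ag_rowSum (i : Fin n) : ∑ l : Fin n, ag G n i l (1 : G) = 1 := by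
  simp only [ag_eq, ← map_sum]
  rw [mk_rel (AnGRel.rowSum i), map_one]

lemma ag_colSum (i : Fin n) : ∑ l : Fin n, ag G n l i (1 : G) = 1 := by
  simp only [ag_eq, ← map_sum]
  rw [mk_rel (AnGRel.colSum i), map_one]

end AnGAux

namespace AnGAux

open MulOpposite

variable (G : Type) [Group G] (n : ℕ)

/-- comultiplication on the free algebra -/
def Δ₀ : FreeAlgebra ℂ (Fin n × Fin n × G) →ₐ[ℂ] AnG G n ⊗[ℂ] AnG G n :=
  FreeAlgebra.lift ℂ fun x => ∑ k : Fin n, ag G n x.1 k x.2.2 ⊗ₜ[ℂ] ag G n k x.2.1 x.2.2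

lemma Δ₀_ι (i j : Fin n) (g : G) :
    Δ₀ G n (FreeAlgebra.ι ℂ (i, j, g)) = ∑ k : Fin n, ag G n i k g ⊗ₜ[ℂ] ag G n k j g := by
  simp [Δ₀]

lemma Δ₀_rel : ∀ ⦃x y : FreeAlgebra ℂ (Fin n × Fin n × G)⦄, AnGRel G n x y → Δ₀ G n x = Δ₀ G n y := by
  intro x y r
  induction r with
  | row i j k g h =>
    by_cases hjk : j = k
    · subst hjk
      rw [if_pos rfl, map_mul, Δ₀_ι, Δ₀_ι, Δ₀_ι, Finset.sum_mul_sum]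
      simp only [Algebra.TensorProduct.tmul_mul_tmul, ag_row, ag_col,
        TensorProduct.ite_tmul, TensorProduct.tmul_ite]
      simp [Finset.sum_ite_eq]
    · rw [if_neg hjk, map_mul, Δ₀_ι, Δ₀_ι, map_zero, Finset.sum_mul_sum]
      simp only [Algebra.TensorProduct.tmul_mul_tmul, ag_row,
        TensorProduct.ite_tmul, TensorProduct.tmul_ite]
      simp [Finset.sum_ite_eq, ag_row, TensorProduct.tmul_ite, hjk]
  | col i j k g h =>
    by_cases hjk : j = k
    · subst hjk
      rw [if_pos rfl, map_mul, Δ₀_ι, Δ₀_ι, Δ₀_ι, Finset.sum_mul_sum]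
      simp only [Algebra.TensorProduct.tmul_mul_tmul, ag_row, ag_col,
        TensorProduct.ite_tmul, TensorProduct.tmul_ite]
      simp [Finset.sum_ite_eq]
    · rw [if_neg hjk, map_mul, Δ₀_ι, Δ₀_ι, map_zero, Finset.sum_mul_sum]
      simp only [Algebra.TensorProduct.tmul_mul_tmul, ag_col,
        TensorProduct.ite_tmul, TensorProduct.tmul_ite]
      simp [Finset.sum_ite_eq, ag_col, TensorProduct.ite_tmul, hjk]
  | rowSum i =>
    rw [map_sum, map_one]
    simp only [Δ₀_ι]
    rw [Finset.sum_comm]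
    simp only [← TensorProduct.tmul_sum, ag_rowSum]
    rw [← TensorProduct.sum_tmul, ag_rowSum, Algebra.TensorProduct.one_def]
  | colSum i =>
    rw [map_sum, map_one]
    simp only [Δ₀_ι]
    rw [Finset.sum_comm]
    simp only [← TensorProduct.sum_tmul, ag_colSum]
    rw [← TensorProduct.tmul_sum, ag_colSum, Algebra.TensorProduct.one_def]

/-- counit on the free algebra -/
def ε₀ : FreeAlgebra ℂ (Fin n × Fin n × G) →ₐ[ℂ] ℂ :=
  FreeAlgebra.lift ℂ fun x => if x.1 = x.2.1 then (1 : ℂ) else 0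

lemma ε₀_rel : ∀ ⦃x y : FreeAlgebra ℂ (Fin n × Fin n × G)⦄, AnGRel G n x y → ε₀ G n x = ε₀ G n y := by
  intro x y r
  induction r with
  | row i j k g h => simp only [map_mul, ε₀, FreeAlgebra.lift_ι_apply]; split_ifs <;> simp_all
  | col i j k g h => simp only [map_mul, ε₀, FreeAlgebra.lift_ι_apply]; split_ifs <;> simp_all
  | rowSum i => simp [ε₀, FreeAlgebra.lift_ι_apply]
  | colSum i => simp [ε₀, FreeAlgebra.lift_ι_apply]

/-- antipode into the opposite algebra, on the free algebra -/
def S₀ : FreeAlgebra ℂ (Fin n × Fin n × G) →ₐ[ℂ] (AnG G n)ᵐᵒᵖ :=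
  FreeAlgebra.lift ℂ fun x => op (ag G n x.2.1 x.1 x.2.2⁻¹)

lemma S₀_rel : ∀ ⦃x y : FreeAlgebra ℂ (Fin n × Fin n × G)⦄, AnGRel G n x y → S₀ G n x = S₀ G n y := by
  intro x y r
  induction r with
  | row i j k g h =>
    simp only [map_mul, S₀, FreeAlgebra.lift_ι_apply, ← op_mul, ag_col]
    split_ifs with h1 h2 h2 <;> simp_all [mul_inv_rev] <;> exact (h1 h2.symm).elim
  | col i j k g h =>
    simp only [map_mul, S₀, FreeAlgebra.lift_ι_apply, ← op_mul, ag_row]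
    split_ifs with h1 h2 h2 <;> simp_all [mul_inv_rev] <;> exact (h1 h2.symm).elim
  | rowSum i =>
    simp only [map_sum, map_one, S₀, FreeAlgebra.lift_ι_apply, inv_one, ← Finset.op_sum, ag_colSum, op_one]
  | colSum i =>
    simp only [map_sum, map_one, S₀, FreeAlgebra.lift_ι_apply, inv_one, ← Finset.op_sum, ag_rowSum, op_one]

end AnGAux

namespace AnGAux

open MulOpposite

variable (G : Type) [Group G] (n : ℕ)

/-- the comultiplication -/
def Δh : AnG G n →ₐ[ℂ] AnG G n ⊗[ℂ] AnG G n :=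
  RingQuot.liftAlgHom ℂ ⟨Δ₀ G n, Δ₀_rel G n⟩

/-- the counit -/
def εh : AnG G n →ₐ[ℂ] ℂ := RingQuot.liftAlgHom ℂ ⟨ε₀ G n, ε₀_rel G n⟩

/-- the antipode, as algebra hom into the opposite algebra -/
def Sm : AnG G n →ₐ[ℂ] (AnG G n)ᵐᵒᵖ := RingQuot.liftAlgHom ℂ ⟨S₀ G n, S₀_rel G n⟩

/-- the antipode -/
def Sl : AnG G n →ₗ[ℂ] AnG G n :=
  (opLinearEquiv ℂ).symm.toLinearMap ∘ₗ (Sm G n).toLinearMap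

/-- the opposite algebra of `AnG`, with the conjugated `ℂ`-algebra structure -/
def ConjA : Type := (AnG G n)ᵐᵒᵖ

instance : Ring (ConjA G n) := inferInstanceAs (Ring (AnG G n)ᵐᵒᵖ)

instance : Algebra ℂ (ConjA G n) :=
  RingHom.toAlgebra' ((algebraMap ℂ (AnG G n)ᵐᵒᵖ).comp (starRingEnd ℂ))
    (fun c x => Algebra.commutes (A := (AnG G n)ᵐᵒᵖ) (starRingEnd ℂ c) x)

/-- the conjugation, as algebra hom from the free algebra to the conjugate algebra -/
def χ₀ : FreeAlgebra ℂ (Fin n × Fin n × G) →ₐ[ℂ] ConjA G n :=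
  FreeAlgebra.lift ℂ fun x : Fin n × Fin n × G =>
    (op (ag G n x.1 x.2.1 x.2.2⁻¹) : (AnG G n)ᵐᵒᵖ)

/-- the conjugation, as ring hom from the free algebra to the opposite algebra -/
def χ : FreeAlgebra ℂ (Fin n × Fin n × G) →+* (AnG G n)ᵐᵒᵖ := (χ₀ G n).toRingHom

lemma χ_ι (i j : Fin n) (g : G) :
    χ G n (FreeAlgebra.ι ℂ (i, j, g)) = op (ag G n i j g⁻¹) := by
  show χ₀ G n (FreeAlgebra.ι ℂ (i, j, g)) = (op (ag G n i j g⁻¹) : (AnG G n)ᵐᵒᵖ)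
  rw [χ₀]
  exact FreeAlgebra.lift_ι_apply _ _

lemma χ_algebraMap (c : ℂ) :
    χ G n (algebraMap ℂ _ c) = algebraMap ℂ (AnG G n)ᵐᵒᵖ (starRingEnd ℂ c) := by
  show χ₀ G n (algebraMap ℂ _ c) = _
  rw [AlgHom.commutes]
  rfl

lemma χ_rel : ∀ ⦃x y : FreeAlgebra ℂ (Fin n × Fin n × G)⦄, AnGRel G n x y → χ G n x = χ G n y := by
  intro x y r
  induction r with
  | row i j k g h =>
    by_cases hjk : j = k
    · subst hjk
      rw [if_pos rfl, map_mul]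
      simp only [χ_ι, ← op_mul, ag_row]
      simp [mul_inv_rev]
    · rw [if_neg hjk, map_zero, map_mul]
      simp only [χ_ι, ← op_mul, ag_row]
      simp [Ne.symm hjk]
  | col i j k g h =>
    by_cases hjk : j = k
    · subst hjk
      rw [if_pos rfl, map_mul]
      simp only [χ_ι, ← op_mul, ag_col]
      simp [mul_inv_rev]
    · rw [if_neg hjk, map_zero, map_mul]
      simp only [χ_ι, ← op_mul, ag_col]
      simp [Ne.symm hjk]
  | rowSum i =>
    simp only [map_sum, map_one, χ_ι, inv_one, ← Finset.op_sum, ag_rowSum, op_one]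
  | colSum i =>
    simp only [map_sum, map_one, χ_ι, inv_one, ← Finset.op_sum, ag_colSum, op_one]

/-- conjugation on the quotient -/
def χ' : AnG G n →+* (AnG G n)ᵐᵒᵖ := RingQuot.lift ⟨χ G n, χ_rel G n⟩

/-- the star operation -/
def star' : AnG G n →+ AnG G n :=
  (opAddEquiv (α := AnG G n)).symm.toAddMonoidHom.comp (χ' G n).toAddMonoidHom

lemma star'_mk (x : FreeAlgebra ℂ (Fin n × Fin n × G)) :
    star' G n (mk G n x) = unop (χ G n x) := by
  have : mk G n x = RingQuot.mkRingHom (AnGRel G n) x := by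
    rw [mk, ← RingQuot.mkAlgHom_coe ℂ]; rfl
  rw [this, star', χ']
  simp [RingQuot.lift_mkRingHom_apply]

end AnGAux

namespace AnGAux

open MulOpposite

variable {G : Type} [Group G] {n : ℕ}

lemma Δh_ag (i j : Fin n) (g : G) :
    Δh G n (ag G n i j g) = ∑ k : Fin n, ag G n i k g ⊗ₜ[ℂ] ag G n k j g := by
  rw [ag_eq, mk, Δh, RingQuot.liftAlgHom_mkAlgHom_apply, Δ₀_ι]

lemma εh_ag (i j : Fin n) (g : G) :
    εh G n (ag G n i j g) = if i = j then 1 else 0 := by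
  rw [ag_eq, mk, εh, RingQuot.liftAlgHom_mkAlgHom_apply]
  simp [ε₀]

lemma Sm_ag (i j : Fin n) (g : G) : Sm G n (ag G n i j g) = op (ag G n j i g⁻¹) := by
  rw [ag_eq, mk, Sm, RingQuot.liftAlgHom_mkAlgHom_apply]
  simp [S₀]

lemma Sl_ag (i j : Fin n) (g : G) : Sl G n (ag G n i j g) = ag G n j i g⁻¹ := by
  simp [Sl, Sm_ag]

lemma Sl_one : Sl G n 1 = 1 := by simp [Sl]

lemma Sl_mul (a b : AnG G n) : Sl G n (a * b) = Sl G n b * Sl G n a := by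
  simp only [Sl, LinearMap.comp_apply, AlgHom.toLinearMap_apply, map_mul]
  rfl

lemma Sl_algebraMap (c : ℂ) :
    Sl G n (algebraMap ℂ (AnG G n) c) = algebraMap ℂ (AnG G n) c := by
  simp only [Sl, LinearMap.comp_apply, AlgHom.toLinearMap_apply, AlgHom.commutes]
  simp [MulOpposite.algebraMap_apply]

lemma star'_ag (i j : Fin n) (g : G) : star' G n (ag G n i j g) = ag G n i j g⁻¹ := by
  rw [ag_eq, star'_mk, χ_ι, unop_op]

lemma star'_mul (a b : AnG G n) : star' G n (a * b) = star' G n b * star' G n a := by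
  simp only [star', AddMonoidHom.comp_apply, RingHom.toAddMonoidHom_eq_coe,
    AddMonoidHom.coe_coe, map_mul]
  rfl

lemma star'_one : star' G n 1 = 1 := by
  simp only [star', AddMonoidHom.comp_apply, RingHom.toAddMonoidHom_eq_coe,
    AddMonoidHom.coe_coe, map_one]
  rfl

lemma star'_algebraMap (c : ℂ) :
    star' G n (algebraMap ℂ (AnG G n) c) = algebraMap ℂ (AnG G n) (starRingEnd ℂ c) := by
  have : algebraMap ℂ (AnG G n) c = mk G n (algebraMap ℂ _ c) := ((mk G n).commutes c).symm
  rw [this, star'_mk, χ_algebraMap, MulOpposite.algebraMap_apply, unop_op]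

lemma star'_smul (c : ℂ) (a : AnG G n) :
    star' G n (c • a) = starRingEnd ℂ c • star' G n a := by
  rw [Algebra.smul_def, star'_mul, star'_algebraMap, Algebra.smul_def]
  exact (Algebra.commutes _ _).symm

/-- induction principle for `AnG` -/
lemma AnG.induction {p : AnG G n → Prop} (h0 : ∀ c : ℂ, p (algebraMap ℂ (AnG G n) c))
    (h1 : ∀ (i j : Fin n) (g : G), p (ag G n i j g))
    (hmul : ∀ a b, p a → p b → p (a * b)) (hadd : ∀ a b, p a → p b → p (a + b))
    (x : AnG G n) : p x := by
  obtain ⟨y, rfl⟩ := RingQuot.mkAlgHom_surjective ℂ (AnGRel G n) x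
  have hmk : ∀ z, RingQuot.mkAlgHom ℂ (AnGRel G n) z = mk G n z := fun z => rfl
  induction y using FreeAlgebra.induction with
  | grade0 c => rw [hmk, AlgHom.commutes]; exact h0 c
  | grade1 v => rw [hmk, ← ag_eq]; exact h1 v.1 v.2.1 v.2.2
  | mul a b ha hb => rw [map_mul]; exact hmul _ _ ha hb
  | add a b ha hb => rw [map_add]; exact hadd _ _ ha hb

lemma star'_star' (x : AnG G n) : star' G n (star' G n x) = x := by
  induction x using AnG.induction with
  | h0 c => rw [star'_algebraMap, star'_algebraMap]; simp
  | h1 i j g => rw [star'_ag, star'_ag, inv_inv]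
  | hmul a b ha hb => rw [star'_mul, star'_mul, ha, hb]
  | hadd a b ha hb => rw [map_add, map_add, ha, hb]

/-- extensionality for algebra homs out of `AnG` -/
lemma AnG.hom_ext {B : Type*} [Semiring B] [Algebra ℂ B] {f g : AnG G n →ₐ[ℂ] B}
    (h : ∀ (i j : Fin n) (gg : G), f (ag G n i j gg) = g (ag G n i j gg)) : f = g := by
  apply RingQuot.ringQuot_ext'
  apply FreeAlgebra.hom_ext
  funext v
  simpa [ag_eq, mk] using h v.1 v.2.1 v.2.2

end AnGAux

namespace AnGAux

open MulOpposite

variable {G : Type} [Group G] {n : ℕ}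

lemma coassoc (x : AnG G n) :
    (Algebra.TensorProduct.assoc ℂ ℂ ℂ (AnG G n) (AnG G n) (AnG G n))
        ((Algebra.TensorProduct.map (Δh G n) (AlgHom.id ℂ (AnG G n))) (Δh G n x)) =
      (Algebra.TensorProduct.map (AlgHom.id ℂ (AnG G n)) (Δh G n)) (Δh G n x) := by
  have h : (Algebra.TensorProduct.assoc ℂ ℂ ℂ (AnG G n) (AnG G n) (AnG G n)).toAlgHom.comp
      ((Algebra.TensorProduct.map (Δh G n) (AlgHom.id ℂ (AnG G n))).comp (Δh G n)) =
      (Algebra.TensorProduct.map (AlgHom.id ℂ (AnG G n)) (Δh G n)).comp (Δh G n) := by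
    apply AnG.hom_ext
    intro i j g
    simp only [AlgHom.comp_apply, AlgEquiv.toAlgHom_eq_coe, AlgHom.coe_coe, Δh_ag, map_sum,
      Algebra.TensorProduct.map_tmul, AlgHom.coe_id, id_eq, TensorProduct.sum_tmul,
      TensorProduct.tmul_sum, Algebra.TensorProduct.assoc_tmul]
    exact Finset.sum_comm
  have := DFunLike.congr_fun h x
  simpa using this

lemma counit_left (x : AnG G n) :
    (Algebra.TensorProduct.lid ℂ (AnG G n))
        ((Algebra.TensorProduct.map (εh G n) (AlgHom.id ℂ (AnG G n))) (Δh G n x)) = x := by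
  have h : (Algebra.TensorProduct.lid ℂ (AnG G n)).toAlgHom.comp
      ((Algebra.TensorProduct.map (εh G n) (AlgHom.id ℂ (AnG G n))).comp (Δh G n)) =
      AlgHom.id ℂ (AnG G n) := by
    apply AnG.hom_ext
    intro i j g
    simp only [AlgHom.comp_apply, AlgEquiv.toAlgHom_eq_coe, AlgHom.coe_coe, Δh_ag, map_sum,
      Algebra.TensorProduct.map_tmul, AlgHom.coe_id, id_eq, εh_ag,
      Algebra.TensorProduct.lid_tmul, ite_smul, one_smul, zero_smul,
      Finset.sum_ite_eq, Finset.mem_univ, ite_true]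
    simp
  have := DFunLike.congr_fun h x
  simpa using this

lemma counit_right (x : AnG G n) :
    (Algebra.TensorProduct.rid ℂ ℂ (AnG G n))
        ((Algebra.TensorProduct.map (AlgHom.id ℂ (AnG G n)) (εh G n)) (Δh G n x)) = x := by
  have h : (Algebra.TensorProduct.rid ℂ ℂ (AnG G n)).toAlgHom.comp
      ((Algebra.TensorProduct.map (AlgHom.id ℂ (AnG G n)) (εh G n)).comp (Δh G n)) =
      AlgHom.id ℂ (AnG G n) := by
    apply AnG.hom_ext
    intro i j g
    simp only [AlgHom.comp_apply, AlgEquiv.toAlgHom_eq_coe, AlgHom.coe_coe, Δh_ag, map_sum,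
      Algebra.TensorProduct.map_tmul, AlgHom.coe_id, id_eq, εh_ag,
      Algebra.TensorProduct.rid_tmul, ite_smul, one_smul, zero_smul,
      Finset.sum_ite_eq', Finset.mem_univ, ite_true]
    simp
  have := DFunLike.congr_fun h x
  simpa using this

lemma antipode_left (x : AnG G n) :
    (LinearMap.mul' ℂ (AnG G n)) ((TensorProduct.map (Sl G n) LinearMap.id) (Δh G n x)) =
      algebraMap ℂ (AnG G n) (εh G n x) := by
  have key : ∀ (t : AnG G n ⊗[ℂ] AnG G n) (b c : AnG G n),
      (LinearMap.mul' ℂ (AnG G n)) ((TensorProduct.map (Sl G n) LinearMap.id) (t * b ⊗ₜ[ℂ] c)) =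
        Sl G n b * (LinearMap.mul' ℂ (AnG G n))
          ((TensorProduct.map (Sl G n) LinearMap.id) t) * c := by
    intro t b c
    induction t using TensorProduct.induction_on with
    | zero => simp
    | tmul a d =>
      simp only [Algebra.TensorProduct.tmul_mul_tmul, TensorProduct.map_tmul,
        LinearMap.mul'_apply, LinearMap.id_coe, id_eq, Sl_mul]
      simp only [mul_assoc]
    | add t₁ t₂ h₁ h₂ =>
      rw [add_mul, map_add, map_add, map_add, map_add, h₁, h₂]
      simp only [mul_add, add_mul]
  have key2 : ∀ y : AnG G n,
      (LinearMap.mul' ℂ (AnG G n)) ((TensorProduct.map (Sl G n) LinearMap.id) (Δh G n y)) =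
        algebraMap ℂ (AnG G n) (εh G n y) →
      ∀ u, (LinearMap.mul' ℂ (AnG G n))
          ((TensorProduct.map (Sl G n) LinearMap.id) (Δh G n y * u)) =
        εh G n y • (LinearMap.mul' ℂ (AnG G n)) ((TensorProduct.map (Sl G n) LinearMap.id) u) := by
    intro y hy u
    induction u using TensorProduct.induction_on with
    | zero => simp
    | tmul b c =>
      rw [key, hy]
      simp only [TensorProduct.map_tmul, LinearMap.mul'_apply, LinearMap.id_coe, id_eq]
      rw [← Algebra.commutes, mul_assoc, ← Algebra.smul_def]
    | add u₁ u₂ h₁ h₂ =>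
      rw [mul_add, map_add, map_add, map_add, map_add, h₁, h₂, smul_add]
  induction x using AnG.induction with
  | h0 c =>
    rw [AlgHom.commutes, AlgHom.commutes, Algebra.TensorProduct.algebraMap_apply]
    simp only [TensorProduct.map_tmul, LinearMap.mul'_apply, LinearMap.id_coe, id_eq,
      Sl_algebraMap, mul_one, Algebra.algebraMap_self_apply]
  | h1 i j g =>
    rw [Δh_ag, map_sum, map_sum, εh_ag]
    simp only [TensorProduct.map_tmul, LinearMap.mul'_apply, LinearMap.id_coe, id_eq, Sl_ag]
    by_cases hij : i = j
    · subst hij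
      simp [ag_row, ag_colSum]
    · simp [ag_row, hij]
  | hmul a b ha hb =>
    rw [map_mul, key2 a ha (Δh G n b), hb, Algebra.smul_def, ← map_mul,
      map_mul (εh G n) a b]
  | hadd a b ha hb =>
    rw [map_add, map_add, map_add, map_add, ha, hb, map_add]

lemma antipode_right (x : AnG G n) :
    (LinearMap.mul' ℂ (AnG G n)) ((TensorProduct.map LinearMap.id (Sl G n)) (Δh G n x)) =
      algebraMap ℂ (AnG G n) (εh G n x) := by
  have key : ∀ (t : AnG G n ⊗[ℂ] AnG G n) (b c : AnG G n),
      (LinearMap.mul' ℂ (AnG G n)) ((TensorProduct.map LinearMap.id (Sl G n)) (b ⊗ₜ[ℂ] c * t)) =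
        b * (LinearMap.mul' ℂ (AnG G n))
          ((TensorProduct.map LinearMap.id (Sl G n)) t) * Sl G n c := by
    intro t b c
    induction t using TensorProduct.induction_on with
    | zero => simp
    | tmul a d =>
      simp only [Algebra.TensorProduct.tmul_mul_tmul, TensorProduct.map_tmul,
        LinearMap.mul'_apply, LinearMap.id_coe, id_eq, Sl_mul]
      simp only [mul_assoc]
    | add t₁ t₂ h₁ h₂ =>
      rw [mul_add, map_add, map_add, map_add, map_add, h₁, h₂]
      simp only [mul_add, add_mul]
  have key2 : ∀ y : AnG G n,
      (LinearMap.mul' ℂ (AnG G n)) ((TensorProduct.map LinearMap.id (Sl G n)) (Δh G n y)) =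
        algebraMap ℂ (AnG G n) (εh G n y) →
      ∀ u, (LinearMap.mul' ℂ (AnG G n))
          ((TensorProduct.map LinearMap.id (Sl G n)) (u * Δh G n y)) =
        εh G n y • (LinearMap.mul' ℂ (AnG G n)) ((TensorProduct.map LinearMap.id (Sl G n)) u) := by
    intro y hy u
    induction u using TensorProduct.induction_on with
    | zero => simp
    | tmul b c =>
      rw [key, hy]
      simp only [TensorProduct.map_tmul, LinearMap.mul'_apply, LinearMap.id_coe, id_eq]
      rw [← Algebra.commutes, mul_assoc, ← Algebra.smul_def]
    | add u₁ u₂ h₁ h₂ =>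
      rw [add_mul, map_add, map_add, map_add, map_add, h₁, h₂, smul_add]
  induction x using AnG.induction with
  | h0 c =>
    rw [AlgHom.commutes, AlgHom.commutes, Algebra.TensorProduct.algebraMap_apply]
    simp only [TensorProduct.map_tmul, LinearMap.mul'_apply, LinearMap.id_coe, id_eq,
      Sl_one, mul_one, Algebra.algebraMap_self_apply]
  | h1 i j g =>
    rw [Δh_ag, map_sum, map_sum, εh_ag]
    simp only [TensorProduct.map_tmul, LinearMap.mul'_apply, LinearMap.id_coe, id_eq, Sl_ag]
    by_cases hij : i = j
    · subst hij
      simp [ag_col, ag_rowSum]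
    · simp [ag_col, hij]
  | hmul a b ha hb =>
    rw [map_mul, key2 b hb (Δh G n a), ha, Algebra.smul_def, ← map_mul,
      map_mul (εh G n) a b, mul_comm ((εh G n) a) ((εh G n) b)]
  | hadd a b ha hb =>
    rw [map_add, map_add, map_add, map_add, ha, hb, map_add]

lemma Δ_star (sT : AnG G n ⊗[ℂ] AnG G n →+ AnG G n ⊗[ℂ] AnG G n)
    (hsT : ∀ a b : AnG G n, sT (a ⊗ₜ[ℂ] b) = star' G n a ⊗ₜ[ℂ] star' G n b) (x : AnG G n) :
    Δh G n (star' G n x) = sT (Δh G n x) := by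
  have anti : ∀ t u : AnG G n ⊗[ℂ] AnG G n, sT (t * u) = sT u * sT t := by
    intro t u
    induction t using TensorProduct.induction_on with
    | zero => simp
    | tmul a b =>
      induction u using TensorProduct.induction_on with
      | zero => simp
      | tmul c d => simp only [Algebra.TensorProduct.tmul_mul_tmul, hsT, star'_mul]
      | add u₁ u₂ h₁ h₂ => rw [mul_add, map_add, h₁, h₂, map_add, add_mul]
    | add t₁ t₂ h₁ h₂ => rw [add_mul, map_add, h₁, h₂, map_add, mul_add]
  induction x using AnG.induction with
  | h0 c =>
    rw [star'_algebraMap, AlgHom.commutes, AlgHom.commutes,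
      Algebra.TensorProduct.algebraMap_apply, Algebra.TensorProduct.algebraMap_apply, hsT,
      star'_algebraMap, star'_one]
  | h1 i j g =>
    rw [star'_ag, Δh_ag, Δh_ag, map_sum]
    simp only [hsT, star'_ag]
  | hmul a b ha hb => rw [star'_mul, map_mul, ha, hb, map_mul, anti]
  | hadd a b ha hb => rw [map_add, map_add, ha, hb, map_add, map_add]

lemma ε_star (x : AnG G n) : εh G n (star' G n x) = star (εh G n x) := by
  induction x using AnG.induction with
  | h0 c =>
    rw [star'_algebraMap, AlgHom.commutes, AlgHom.commutes]
    simp only [Algebra.algebraMap_self, RingHom.id_apply, starRingEnd_apply]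
  | h1 i j g =>
    rw [star'_ag, εh_ag, εh_ag]
    split_ifs <;> simp
  | hmul a b ha hb => rw [star'_mul, map_mul, ha, hb, map_mul, star_mul]
  | hadd a b ha hb => rw [map_add, map_add, ha, hb, map_add, star_add]

end AnGAux

open AnGAux

/-- For a group `G` and `n ≥ 1`, the universal algebra `𝒜_n(G)` admits a
Hopf `*`-algebra structure over `ℂ` determined on the generators by
`a_{ij}(g)* = a_{ij}(g⁻¹)`, `Δ(a_{ij}(g)) = Σ_k a_{ik}(g) ⊗ a_{kj}(g)`,
`ε(a_{ij}(g)) = δ_{ij}`, `S(a_{ij}(g)) = a_{ji}(g⁻¹)`; here `Δ` and `ε` are algebra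
homomorphisms, `S` is an algebra anti-homomorphism, `Δ` is coassociative with counit `ε`,
and `S` satisfies the antipode identities. -/
theorem stmt_6 (G : Type) [Group G] (n : ℕ) (hn : 1 ≤ n) :
    ∃ (Δ : AnG G n →ₐ[ℂ] (AnG G n ⊗[ℂ] AnG G n)) (ε : AnG G n →ₐ[ℂ] ℂ)
      (S : AnG G n →ₗ[ℂ] AnG G n) (star' : AnG G n →+ AnG G n),
      -- values on the generators
      (∀ (i j : Fin n) (g : G),
        Δ (ag G n i j g) = ∑ k : Fin n, ag G n i k g ⊗ₜ[ℂ] ag G n k j g) ∧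
      (∀ (i j : Fin n) (g : G), ε (ag G n i j g) = if i = j then 1 else 0) ∧
      (∀ (i j : Fin n) (g : G), S (ag G n i j g) = ag G n j i g⁻¹) ∧
      (∀ (i j : Fin n) (g : G), star' (ag G n i j g) = ag G n i j g⁻¹) ∧
      -- `S` is an algebra anti-homomorphism
      (S 1 = 1) ∧ (∀ a b : AnG G n, S (a * b) = S b * S a) ∧
      -- `star'` is a conjugate-linear involutive anti-automorphism
      (∀ (c : ℂ) (h : AnG G n), star' (c • h) = (starRingEnd ℂ) c • star' h) ∧
      (∀ h : AnG G n, star' (star' h) = h) ∧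
      (∀ a b : AnG G n, star' (a * b) = star' b * star' a) ∧
      (star' 1 = 1) ∧
      -- coassociativity
      (∀ h : AnG G n,
        (Algebra.TensorProduct.assoc ℂ ℂ ℂ (AnG G n) (AnG G n) (AnG G n))
            ((Algebra.TensorProduct.map Δ (AlgHom.id ℂ (AnG G n))) (Δ h)) =
          (Algebra.TensorProduct.map (AlgHom.id ℂ (AnG G n)) Δ) (Δ h)) ∧
      -- counit laws
      (∀ h : AnG G n,
        (Algebra.TensorProduct.lid ℂ (AnG G n))
            ((Algebra.TensorProduct.map ε (AlgHom.id ℂ (AnG G n))) (Δ h)) = h) ∧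
      (∀ h : AnG G n,
        (Algebra.TensorProduct.rid ℂ ℂ (AnG G n))
            ((Algebra.TensorProduct.map (AlgHom.id ℂ (AnG G n)) ε) (Δ h)) = h) ∧
      -- antipode identities `m∘(S⊗id)∘Δ = η∘ε = m∘(id⊗S)∘Δ`
      (∀ h : AnG G n,
        (LinearMap.mul' ℂ (AnG G n)) ((TensorProduct.map S LinearMap.id) (Δ h)) =
          algebraMap ℂ (AnG G n) (ε h)) ∧
      (∀ h : AnG G n,
        (LinearMap.mul' ℂ (AnG G n)) ((TensorProduct.map LinearMap.id S) (Δ h)) =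
          algebraMap ℂ (AnG G n) (ε h)) ∧
      -- `Δ` and `ε` are `*`-homomorphisms
      (∀ sT : AnG G n ⊗[ℂ] AnG G n →+ AnG G n ⊗[ℂ] AnG G n,
        (∀ a b : AnG G n, sT (a ⊗ₜ[ℂ] b) = star' a ⊗ₜ[ℂ] star' b) →
        ∀ h : AnG G n, Δ (star' h) = sT (Δ h)) ∧
      (∀ h : AnG G n, ε (star' h) = star (ε h)) := by
  exact ⟨Δh G n, εh G n, Sl G n, AnGAux.star' G n,
    fun i j g => Δh_ag i j g,
    fun i j g => εh_ag i j g,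
    fun i j g => Sl_ag i j g,
    fun i j g => star'_ag i j g,
    Sl_one, Sl_mul,
    fun c h => star'_smul c h,
    star'_star', star'_mul, star'_one,
    coassoc, counit_left, counit_right,
    antipode_left, antipode_right,
    Δ_star, ε_star⟩
end
end

section
/- Let p ≥ 1 and n ≥ 1. The algebra 𝒜_n(ℤ/pℤ) is isomorphic as a ℂ-algebra to the universal unital ℂ-algebra B with generators a_{ij} (1 ≤ i,j ≤ n) and relations Σ_{l=1}^n a_{il}^p = 1 = Σ_{l=1}^n a_{li}^p and a_{ij}a_{ik} = 0 = a_{ji}a_{ki} for all 1 ≤ i,j,k ≤ n with j ≠ k; an isomorphism B → 𝒜_n(ℤ/pℤ) is given by sending a_{ij} to a_{ij}(ḡ), where ḡ denotes a fixed generator of ℤ/pℤ (and then a_{ij}^m maps to a_{ij}(ḡ^m)). -/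
noncomputable section

/-- Relations of the universal algebra `𝒜_n(ℤ/pℤ)` (the cyclic group written additively):
generators `a_{ij}(g)`, `g ∈ ℤ/pℤ`. -/
inductive AnZRel (p n : ℕ) :
    FreeAlgebra ℂ (Fin n × Fin n × ZMod p) → FreeAlgebra ℂ (Fin n × Fin n × ZMod p) → Prop
  | row (i j k : Fin n) (g h : ZMod p) :
      AnZRel p n (FreeAlgebra.ι ℂ (i, j, g) * FreeAlgebra.ι ℂ (i, k, h))
        (if j = k then FreeAlgebra.ι ℂ (i, j, g + h) else 0)
  | col (i j k : Fin n) (g h : ZMod p) :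
      AnZRel p n (FreeAlgebra.ι ℂ (j, i, g) * FreeAlgebra.ι ℂ (k, i, h))
        (if j = k then FreeAlgebra.ι ℂ (j, i, g + h) else 0)
  | rowSum (i : Fin n) : AnZRel p n (∑ l : Fin n, FreeAlgebra.ι ℂ (i, l, (0 : ZMod p))) 1
  | colSum (i : Fin n) : AnZRel p n (∑ l : Fin n, FreeAlgebra.ι ℂ (l, i, (0 : ZMod p))) 1

/-- The universal algebra `𝒜_n(ℤ/pℤ)`. -/
abbrev AnZ (p n : ℕ) : Type := RingQuot (AnZRel p n)

/-- The generators `a_{ij}(g)` of `𝒜_n(ℤ/pℤ)`. -/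
def az (p n : ℕ) (i j : Fin n) (g : ZMod p) : AnZ p n :=
  RingQuot.mkAlgHom ℂ (AnZRel p n) (FreeAlgebra.ι ℂ (i, j, g))

/-- Relations of the algebra `B`: generators `a_{ij}`, relations
`Σ_l a_{il}^p = 1 = Σ_l a_{li}^p` and `a_{ij}a_{ik} = 0 = a_{ji}a_{ki}` for `j ≠ k`. -/
inductive BRel (p n : ℕ) :
    FreeAlgebra ℂ (Fin n × Fin n) → FreeAlgebra ℂ (Fin n × Fin n) → Prop
  | row (i j k : Fin n) (h : j ≠ k) :
      BRel p n (FreeAlgebra.ι ℂ (i, j) * FreeAlgebra.ι ℂ (i, k)) 0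
  | col (i j k : Fin n) (h : j ≠ k) :
      BRel p n (FreeAlgebra.ι ℂ (j, i) * FreeAlgebra.ι ℂ (k, i)) 0
  | rowSum (i : Fin n) : BRel p n (∑ l : Fin n, (FreeAlgebra.ι ℂ (i, l)) ^ p) 1
  | colSum (i : Fin n) : BRel p n (∑ l : Fin n, (FreeAlgebra.ι ℂ (l, i)) ^ p) 1

/-- The universal algebra `B`. -/
abbrev BAlg (p n : ℕ) : Type := RingQuot (BRel p n)

/-- The generators `a_{ij}` of `B`. -/
def bgen (p n : ℕ) (i j : Fin n) : BAlg p n :=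
  RingQuot.mkAlgHom ℂ (BRel p n) (FreeAlgebra.ι ℂ (i, j))

namespace Stmt7Aux

variable (p n : ℕ)

lemma az_mul_row (i j k : Fin n) (g h : ZMod p) :
    az p n i j g * az p n i k h = if j = k then az p n i j (g + h) else 0 := by
  have H := RingQuot.mkAlgHom_rel ℂ (AnZRel.row (p := p) (n := n) i j k g h)
  simp only [map_mul, apply_ite (RingQuot.mkAlgHom ℂ (AnZRel p n)), map_zero] at H
  exact H

lemma az_mul_col (i j k : Fin n) (g h : ZMod p) :
    az p n j i g * az p n k i h = if j = k then az p n j i (g + h) else 0 := by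
  have H := RingQuot.mkAlgHom_rel ℂ (AnZRel.col (p := p) (n := n) i j k g h)
  simp only [map_mul, apply_ite (RingQuot.mkAlgHom ℂ (AnZRel p n)), map_zero] at H
  exact H

lemma az_rowSum (i : Fin n) : ∑ l : Fin n, az p n i l 0 = 1 := by
  have H := RingQuot.mkAlgHom_rel ℂ (AnZRel.rowSum (p := p) (n := n) i)
  simp only [map_sum, map_one] at H
  exact H

lemma az_colSum (i : Fin n) : ∑ l : Fin n, az p n l i 0 = 1 := by
  have H := RingQuot.mkAlgHom_rel ℂ (AnZRel.colSum (p := p) (n := n) i)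
  simp only [map_sum, map_one] at H
  exact H

lemma az_pow (i j : Fin n) : ∀ m : ℕ, 1 ≤ m → (az p n i j 1) ^ m = az p n i j (m : ZMod p)
  | 1, _ => by simp
  | (m + 2), _ => by
    rw [pow_succ, az_pow i j (m + 1) (by omega), az_mul_row, if_pos rfl]
    push_cast
    ring_nf

lemma bgen_mul_row (i j k : Fin n) (h : j ≠ k) : bgen p n i j * bgen p n i k = 0 := by
  have H := RingQuot.mkAlgHom_rel ℂ (BRel.row (p := p) (n := n) i j k h)
  simp only [map_mul, map_zero] at H
  exact H

lemma bgen_mul_col (i j k : Fin n) (h : j ≠ k) : bgen p n j i * bgen p n k i = 0 := by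
  have H := RingQuot.mkAlgHom_rel ℂ (BRel.col (p := p) (n := n) i j k h)
  simp only [map_mul, map_zero] at H
  exact H

lemma b_rowSum (i : Fin n) : ∑ l : Fin n, bgen p n i l ^ p = 1 := by
  have H := RingQuot.mkAlgHom_rel ℂ (BRel.rowSum (p := p) (n := n) i)
  simp only [map_sum, map_pow, map_one] at H
  exact H

lemma b_colSum (i : Fin n) : ∑ l : Fin n, bgen p n l i ^ p = 1 := by
  have H := RingQuot.mkAlgHom_rel ℂ (BRel.colSum (p := p) (n := n) i)
  simp only [map_sum, map_pow, map_one] at H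
  exact H

lemma bgen_pow_mul_row (i j k : Fin n) (h : j ≠ k) {a b : ℕ} (ha : 1 ≤ a) (hb : 1 ≤ b) :
    bgen p n i j ^ a * bgen p n i k ^ b = 0 := by
  obtain ⟨a, rfl⟩ : ∃ a', a = a' + 1 := ⟨a - 1, by omega⟩
  obtain ⟨b, rfl⟩ : ∃ b', b = b' + 1 := ⟨b - 1, by omega⟩
  rw [pow_succ, pow_succ', mul_assoc, ← mul_assoc (bgen p n i j) (bgen p n i k),
    bgen_mul_row p n i j k h, zero_mul, mul_zero]

lemma bgen_pow_mul_col (i j k : Fin n) (h : j ≠ k) {a b : ℕ} (ha : 1 ≤ a) (hb : 1 ≤ b) :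
    bgen p n j i ^ a * bgen p n k i ^ b = 0 := by
  obtain ⟨a, rfl⟩ : ∃ a', a = a' + 1 := ⟨a - 1, by omega⟩
  obtain ⟨b, rfl⟩ : ∃ b', b = b' + 1 := ⟨b - 1, by omega⟩
  rw [pow_succ, pow_succ', mul_assoc, ← mul_assoc (bgen p n j i) (bgen p n k i),
    bgen_mul_col p n i j k h, zero_mul, mul_zero]

lemma bgen_pow_succ_p (hp : 1 ≤ p) (i j : Fin n) :
    bgen p n i j ^ (p + 1) = bgen p n i j := by
  have h1 : (∑ l : Fin n, bgen p n i l ^ p) * bgen p n i j = bgen p n i j := by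
    rw [b_rowSum, one_mul]
  rw [Finset.sum_mul, Finset.sum_eq_single j] at h1
  · rw [← pow_succ] at h1; exact h1
  · intro l _ hl
    have := bgen_pow_mul_row p n i l j hl (a := p) (b := 1) hp le_rfl
    simpa using this
  · simp

lemma bgen_pow_period (hp : 1 ≤ p) (i j : Fin n) {m : ℕ} (hm : 1 ≤ m) :
    bgen p n i j ^ (m + p) = bgen p n i j ^ m := by
  obtain ⟨m, rfl⟩ : ∃ m', m = m' + 1 := ⟨m - 1, by omega⟩
  have h : m + 1 + p = m + (p + 1) := by omega
  rw [h, pow_add, bgen_pow_succ_p p n hp i j, ← pow_succ]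

/-- canonical exponent -/
def canon (m : ℕ) : ℕ := if m % p = 0 then p else m % p

lemma canon_pos (hp : 1 ≤ p) (m : ℕ) : 1 ≤ canon p m := by
  unfold canon; split <;> omega

lemma canon_mod (m : ℕ) : canon p m % p = m % p := by
  unfold canon; split_ifs with h
  · simp [Nat.mod_self, h]
  · exact Nat.mod_mod_of_dvd m dvd_rfl

lemma bgen_pow_canon (hp : 1 ≤ p) (i j : Fin n) :
    ∀ m : ℕ, 1 ≤ m → bgen p n i j ^ m = bgen p n i j ^ canon p m := by
  intro m
  induction m using Nat.strong_induction_on with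
  | _ m ih =>
    intro hm
    by_cases hle : m ≤ p
    · have : canon p m = m := by
        unfold canon
        rcases eq_or_lt_of_le hle with h | h
        · subst h; simp
        · rw [Nat.mod_eq_of_lt h, if_neg (by omega)]
      rw [this]
    · have h1 : 1 ≤ m - p := by omega
      have h2 : m - p + p = m := by omega
      have := bgen_pow_period p n hp i j h1
      rw [h2] at this
      rw [this, ih (m - p) (by omega) h1]
      congr 1
      unfold canon
      have : (m - p) % p = m % p := by
        conv_rhs => rw [← h2]
        simp [Nat.add_mod_right]
      rw [this]

lemma bgen_pow_congr (hp : 1 ≤ p) (i j : Fin n) {a b : ℕ} (ha : 1 ≤ a) (hb : 1 ≤ b)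
    (hab : a % p = b % p) : bgen p n i j ^ a = bgen p n i j ^ b := by
  rw [bgen_pow_canon p n hp i j a ha, bgen_pow_canon p n hp i j b hb]
  congr 1
  unfold canon
  rw [hab]

/-- representative in `[1, p]` of an element of `ZMod p`. -/
def rep (g : ZMod p) : ℕ := if (ZMod.val g) = 0 then p else ZMod.val g

lemma rep_pos (hp : 1 ≤ p) (g : ZMod p) : 1 ≤ rep p g := by
  unfold rep; split <;> omega

lemma rep_cast (hp : 1 ≤ p) (g : ZMod p) : ((rep p g : ℕ) : ZMod p) = g := by
  have : NeZero p := ⟨by omega⟩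
  unfold rep
  split_ifs with h
  · rw [ZMod.natCast_self]
    exact ((ZMod.val_eq_zero g).mp h).symm
  · exact ZMod.natCast_zmod_val g

lemma rep_zero (hp : 1 ≤ p) : rep p (0 : ZMod p) = p := by
  have : NeZero p := ⟨by omega⟩
  simp [rep]

lemma rep_one (hp : 1 ≤ p) : rep p (1 : ZMod p) = 1 := by
  rcases eq_or_lt_of_le hp with h | h
  · subst h
    have h0 : (1 : ZMod 1).val = 0 := rfl
    simp [rep, h0]
  · have : Fact (1 < p) := ⟨h⟩
    unfold rep
    rw [ZMod.val_one p, if_neg one_ne_zero]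


/-- The algebra map `B → 𝒜_n(ℤ/pℤ)` on the free algebra. -/
def toFun : FreeAlgebra ℂ (Fin n × Fin n) →ₐ[ℂ] AnZ p n :=
  FreeAlgebra.lift ℂ (fun x => az p n x.1 x.2 (1 : ZMod p))

lemma toFun_ι (i j : Fin n) : toFun p n (FreeAlgebra.ι ℂ (i, j)) = az p n i j 1 := by
  simp [toFun]

lemma toFun_rel (hp : 1 ≤ p) : ∀ ⦃x y⦄, BRel p n x y → toFun p n x = toFun p n y := by
  intro x y hxy
  induction hxy with
  | row i j k h =>
    rw [map_mul, toFun_ι, toFun_ι, map_zero, az_mul_row, if_neg h]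
  | col i j k h =>
    rw [map_mul, toFun_ι, toFun_ι, map_zero, az_mul_col, if_neg h]
  | rowSum i =>
    rw [map_sum, map_one]
    have : ∀ l : Fin n, toFun p n (FreeAlgebra.ι ℂ (i, l) ^ p) = az p n i l 0 := by
      intro l
      rw [map_pow, toFun_ι, az_pow p n i l p hp, ZMod.natCast_self]
    simp only [this]
    exact az_rowSum p n i
  | colSum i =>
    rw [map_sum, map_one]
    have : ∀ l : Fin n, toFun p n (FreeAlgebra.ι ℂ (l, i) ^ p) = az p n l i 0 := by
      intro l
      rw [map_pow, toFun_ι, az_pow p n l i p hp, ZMod.natCast_self]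
    simp only [this]
    exact az_colSum p n i

def Phi (hp : 1 ≤ p) : BAlg p n →ₐ[ℂ] AnZ p n :=
  RingQuot.liftAlgHom ℂ ⟨toFun p n, toFun_rel p n hp⟩

lemma Phi_bgen (hp : 1 ≤ p) (i j : Fin n) : Phi p n hp (bgen p n i j) = az p n i j 1 := by
  rw [Phi, bgen, RingQuot.liftAlgHom_mkAlgHom_apply, toFun_ι]

/-- The algebra map `𝒜_n(ℤ/pℤ) → B` on the free algebra. -/
def invFun : FreeAlgebra ℂ (Fin n × Fin n × ZMod p) →ₐ[ℂ] BAlg p n :=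
  FreeAlgebra.lift ℂ (fun x => bgen p n x.1 x.2.1 ^ rep p x.2.2)

lemma invFun_ι (i j : Fin n) (g : ZMod p) :
    invFun p n (FreeAlgebra.ι ℂ (i, j, g)) = bgen p n i j ^ rep p g := by
  simp [invFun]

lemma rep_add_mod (hp : 1 ≤ p) (g h : ZMod p) :
    (rep p g + rep p h) % p = rep p (g + h) % p := by
  have : NeZero p := ⟨by omega⟩
  rw [← ZMod.natCast_eq_natCast_iff']
  push_cast
  rw [rep_cast p hp, rep_cast p hp, rep_cast p hp]

lemma invFun_rel (hp : 1 ≤ p) : ∀ ⦃x y⦄, AnZRel p n x y → invFun p n x = invFun p n y := by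
  intro x y hxy
  induction hxy with
  | row i j k g h =>
    rw [map_mul, invFun_ι, invFun_ι, apply_ite (invFun p n), map_zero, invFun_ι]
    split_ifs with hjk
    · subst hjk
      rw [← pow_add]
      exact bgen_pow_congr p n hp i j
        (by have := rep_pos p hp g; have := rep_pos p hp h; omega)
        (rep_pos p hp (g + h)) (rep_add_mod p hp g h)
    · exact bgen_pow_mul_row p n i j k hjk (rep_pos p hp g) (rep_pos p hp h)
  | col i j k g h =>
    rw [map_mul, invFun_ι, invFun_ι, apply_ite (invFun p n), map_zero, invFun_ι]
    split_ifs with hjk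
    · subst hjk
      rw [← pow_add]
      exact bgen_pow_congr p n hp j i
        (by have := rep_pos p hp g; have := rep_pos p hp h; omega)
        (rep_pos p hp (g + h)) (rep_add_mod p hp g h)
    · exact bgen_pow_mul_col p n i j k hjk (rep_pos p hp g) (rep_pos p hp h)
  | rowSum i =>
    rw [map_sum, map_one]
    simp only [invFun_ι, rep_zero p hp]
    exact b_rowSum p n i
  | colSum i =>
    rw [map_sum, map_one]
    simp only [invFun_ι, rep_zero p hp]
    exact b_colSum p n i

def Psi (hp : 1 ≤ p) : AnZ p n →ₐ[ℂ] BAlg p n :=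
  RingQuot.liftAlgHom ℂ ⟨invFun p n, invFun_rel p n hp⟩

lemma Psi_az (hp : 1 ≤ p) (i j : Fin n) (g : ZMod p) :
    Psi p n hp (az p n i j g) = bgen p n i j ^ rep p g := by
  rw [Psi, az, RingQuot.liftAlgHom_mkAlgHom_apply, invFun_ι]

lemma comp1 (hp : 1 ≤ p) : (Phi p n hp).comp (Psi p n hp) = AlgHom.id ℂ (AnZ p n) := by
  apply RingQuot.ringQuot_ext'
  apply FreeAlgebra.hom_ext
  funext x
  obtain ⟨i, j, g⟩ := x
  simp only [AlgHom.coe_comp, Function.comp_apply, AlgHom.coe_id, id_eq]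
  show Phi p n hp (Psi p n hp (az p n i j g)) = az p n i j g
  rw [Psi_az, map_pow, Phi_bgen, az_pow p n i j (rep p g) (rep_pos p hp g), rep_cast p hp]

lemma comp2 (hp : 1 ≤ p) : (Psi p n hp).comp (Phi p n hp) = AlgHom.id ℂ (BAlg p n) := by
  apply RingQuot.ringQuot_ext'
  apply FreeAlgebra.hom_ext
  funext x
  obtain ⟨i, j⟩ := x
  simp only [AlgHom.coe_comp, Function.comp_apply, AlgHom.coe_id, id_eq]
  show Psi p n hp (Phi p n hp (bgen p n i j)) = bgen p n i j
  rw [Phi_bgen, Psi_az, rep_one p hp, pow_one]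

end Stmt7Aux

open Stmt7Aux in
/-- For `p ≥ 1` and `n ≥ 1`, the algebra `𝒜_n(ℤ/pℤ)` is isomorphic as a
`ℂ`-algebra to the universal algebra `B` with generators `a_{ij}` and relations
`Σ_l a_{il}^p = 1 = Σ_l a_{li}^p`, `a_{ij}a_{ik} = 0 = a_{ji}a_{ki}` (`j ≠ k`); the
isomorphism sends `a_{ij}` to `a_{ij}(1̄)` for the generator `1̄` of `ℤ/pℤ` (and hence
`a_{ij}^m` to `a_{ij}(m·1̄)`). -/
theorem stmt_7 (p n : ℕ) (hp : 1 ≤ p) (hn : 1 ≤ n) :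
    ∃ iso : BAlg p n ≃ₐ[ℂ] AnZ p n,
      (∀ i j : Fin n, iso (bgen p n i j) = az p n i j (1 : ZMod p)) ∧
      (∀ (i j : Fin n) (m : ℕ), 1 ≤ m →
        iso ((bgen p n i j) ^ m) = az p n i j (m : ZMod p)) := by
  refine ⟨AlgEquiv.ofAlgHom (Phi p n hp) (Psi p n hp) (comp1 p n hp) (comp2 p n hp), ?_, ?_⟩
  · intro i j
    exact Phi_bgen p n hp i j
  · intro i j m hm
    show Phi p n hp (bgen p n i j ^ m) = az p n i j (m : ZMod p)
    rw [map_pow, Phi_bgen, az_pow p n i j m hm]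
end
end

section
/- Let G be a group, let G*G be the free product of two copies of G with canonical injections ν_1, ν_2 : G → G*G, and let τ be the automorphism of G*G exchanging the two copies (τ∘ν_1 = ν_2 and τ∘ν_2 = ν_1). For every x ∈ G*G, one has τ(x) = x if and only if x = 1. -/
open Monoid

private abbrev F (G : Type) : Bool → Type := fun _ => G

/-- The swap homomorphism on `CoprodI (F G)`. -/
private def σhom (G : Type) [Group G] : CoprodI (F G) →* CoprodI (F G) :=
  CoprodI.lift fun i => (CoprodI.of (M := F G) (i := !i))

private lemma σhom_of (G : Type) [Group G] (i : Bool) (g : G) :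
    σhom G (CoprodI.of (M := F G) (i := i) g) = CoprodI.of (M := F G) (i := !i) g := by
  simp [σhom]

/-- Swap the indices in a word. -/
private def swapWord (G : Type) [Group G] (w : CoprodI.Word (F G)) : CoprodI.Word (F G) where
  toList := w.toList.map fun p => ⟨!p.1, p.2⟩
  ne_one := by
    intro l hl
    rcases List.mem_map.1 hl with ⟨p, hp, rfl⟩
    exact w.ne_one p hp
  chain_ne := by
    rw [List.isChain_map]
    refine w.chain_ne.imp ?_
    intro a b hab h
    exact hab (by simpa using h)

private lemma prod_swapWord (G : Type) [Group G] (w : CoprodI.Word (F G)) :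
    (swapWord G w).prod = σhom G w.prod := by
  simp only [CoprodI.Word.prod, swapWord, List.map_map, map_list_prod]
  congr 1

private lemma σhom_fixed (G : Type) [Group G] (x : CoprodI (F G))
    (h : σhom G x = x) : x = 1 := by
  classical
  set w := CoprodI.Word.equiv (M := F G) x with hw
  have hprod : w.prod = x := CoprodI.Word.equiv.symm_apply_apply x
  have h2 : (swapWord G w).prod = w.prod := by
    rw [prod_swapWord, hprod, h]
  have h3 : swapWord G w = w :=
    (CoprodI.Word.equiv (M := F G)).symm.injective h2
  have h4 : (swapWord G w).toList = w.toList := congrArg CoprodI.Word.toList h3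
  rcases hl : w.toList with _ | ⟨p, rest⟩
  · rw [← hprod]
    simp [CoprodI.Word.prod, hl]
  · exfalso
    simp only [swapWord, hl, List.map_cons, List.cons.injEq] at h4
    have hp : (⟨!p.1, p.2⟩ : Σ _ : Bool, G).1 = p.1 := congrArg Sigma.fst h4.1
    simp at hp

/-- Let `G` be a group, `G ∗ G` the free product of two copies of `G` with
canonical injections `inl, inr`, and `τ` the automorphism of `G ∗ G` exchanging the two
copies.  Then for every `x ∈ G ∗ G`, `τ(x) = x` if and only if `x = 1`. -/
theorem stmt_9 (G : Type) [Group G] (τ : Monoid.Coprod G G ≃* Monoid.Coprod G G)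
    (hτ₁ : ∀ g : G, τ (Monoid.Coprod.inl g) = Monoid.Coprod.inr g)
    (hτ₂ : ∀ g : G, τ (Monoid.Coprod.inr g) = Monoid.Coprod.inl g)
    (x : Monoid.Coprod G G) :
    τ x = x ↔ x = 1 := by
  constructor
  · intro h
    -- transfer to `CoprodI`
    set e : Monoid.Coprod G G →* CoprodI (F G) :=
      Coprod.lift (CoprodI.of (M := F G) (i := false)) (CoprodI.of (M := F G) (i := true))
      with he
    set f : CoprodI (F G) →* Monoid.Coprod G G :=
      CoprodI.lift (fun i => bif i then (Coprod.inr : G →* Monoid.Coprod G G) else Coprod.inl)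
      with hf
    have hfe : f.comp e = MonoidHom.id _ := by
      apply Coprod.hom_ext <;> ext g <;>
        simp [he, hf, Coprod.lift_apply_inl, Coprod.lift_apply_inr, CoprodI.lift_of]
    have hcomm : ∀ y : Monoid.Coprod G G, e (τ y) = σhom G (e y) := by
      intro y
      have : (e.comp τ.toMonoidHom) = (σhom G).comp e := by
        apply Coprod.hom_ext <;> ext g <;>
          simp [he, hτ₁ g, hτ₂ g, Coprod.lift_apply_inl, Coprod.lift_apply_inr, σhom_of]
      exact DFunLike.congr_fun this y
    have hfix : σhom G (e x) = e x := by rw [← hcomm, h]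
    have : e x = 1 := σhom_fixed G (e x) hfix
    have := congrArg f this
    rw [map_one] at this
    calc x = f (e x) := (DFunLike.congr_fun hfe x).symm
    _ = 1 := this
  · rintro rfl; exact map_one τ
end

section
/- Let G be a nontrivial group, let G*G be the free product of two copies of G with canonical injections ν_1, ν_2, and let τ be the automorphism of G*G exchanging the two copies. Suppose that every element x ∈ G*G with x ≠ 1 satisfies x² = 1 or x·τ(x) = τ(x)·x. Then G is cyclic of order 2 (i.e., G has exactly two elements). -/
open Monoid Monoid.CoprodI

section Helpers

variable {ι : Type*} {M : ι → Type*} [∀ i, Monoid (M i)]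

private lemma word_prod_injective [DecidableEq ι] [∀ i, DecidableEq (M i)]
    {w₁ w₂ : CoprodI.Word M} (h : w₁.prod = w₂.prod) : w₁ = w₂ :=
  (CoprodI.Word.equiv (M := M)).symm.injective h

private lemma neword_prod_ne_one [DecidableEq ι] [∀ i, DecidableEq (M i)]
    {i j : ι} (w : NeWord M i j) : w.prod ≠ 1 := by
  intro hp
  have h1 : w.toWord = CoprodI.Word.empty := by
    apply word_prod_injective
    rw [show w.toWord.prod = w.prod from rfl, hp, CoprodI.Word.prod_empty]
  exact w.toList_ne_nil (by rw [show w.toList = w.toWord.toList from rfl, h1]; rfl)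

private lemma neword_fst_eq_of_prod_eq [DecidableEq ι] [∀ i, DecidableEq (M i)]
    {i j k l : ι} (w₁ : NeWord M i j) (w₂ : NeWord M k l)
    (h : w₁.prod = w₂.prod) : i = k := by
  have h1 : w₁.toWord = w₂.toWord := word_prod_injective h
  have h2 : w₁.toList.head? = w₂.toList.head? := by
    rw [show w₁.toList = w₁.toWord.toList from rfl, show w₂.toList = w₂.toWord.toList from rfl, h1]
  rw [w₁.toList_head?, w₂.toList_head?, Option.some_inj] at h2
  exact congrArg Sigma.fst h2

end Helpers

/-- Let `G` be a nontrivial group, `G ∗ G` the free product of two copies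
of `G`, and `τ` the automorphism exchanging the two copies.  If every `x ∈ G ∗ G` with
`x ≠ 1` satisfies `x² = 1` or `x·τ(x) = τ(x)·x`, then `G` is cyclic of order two, i.e. `G`
has exactly two elements. -/
theorem stmt_10 (G : Type) [Group G] [Nontrivial G]
    (τ : Monoid.Coprod G G ≃* Monoid.Coprod G G)
    (hτ₁ : ∀ g : G, τ (Monoid.Coprod.inl g) = Monoid.Coprod.inr g)
    (hτ₂ : ∀ g : G, τ (Monoid.Coprod.inr g) = Monoid.Coprod.inl g)
    (h : ∀ x : Monoid.Coprod G G, x ≠ 1 → x ^ 2 = 1 ∨ x * τ x = τ x * x) :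
    Nat.card G = 2 := by
  classical
  set M : Bool → Type := fun _ => G with hM
  haveI : ∀ b, Group (M b) := fun _ => ‹Group G›
  set oF : G →* CoprodI M := CoprodI.of (M := M) (i := false) with hoF
  set oT : G →* CoprodI M := CoprodI.of (M := M) (i := true) with hoT
  set φ : Monoid.Coprod G G →* CoprodI M := Monoid.Coprod.lift oF oT with hφ
  have φl : ∀ g : G, φ (Monoid.Coprod.inl g) = oF g := fun g => Coprod.lift_apply_inl oF oT g
  have φr : ∀ g : G, φ (Monoid.Coprod.inr g) = oT g := fun g => Coprod.lift_apply_inr oF oT g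
  have hFT : (false : Bool) ≠ true := Bool.false_ne_true
  -- Step 1 : every element of G has order dividing 2
  have sq : ∀ g : G, g * g = 1 := by
    intro g
    rcases eq_or_ne g 1 with rfl | hg
    · simp
    have hx : (Monoid.Coprod.inl g : Monoid.Coprod G G) ≠ 1 := by
      intro hx1
      apply neword_prod_ne_one (NeWord.singleton (M := M) (i := false) g hg)
      rw [NeWord.prod_singleton, ← φl g, hx1, map_one]
    rcases h _ hx with h2 | hc
    · have := congrArg (Monoid.Coprod.fst (M := G) (N := G)) h2
      simpa [pow_two] using this
    · exfalso
      rw [hτ₁ g] at hc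
      have := congrArg φ hc
      rw [map_mul, map_mul, φl, φr] at this
      have := neword_fst_eq_of_prod_eq
        (NeWord.append (NeWord.singleton (M := M) (i := false) g hg) hFT
          (NeWord.singleton (M := M) (i := true) g hg))
        (NeWord.append (NeWord.singleton (M := M) (i := true) g hg) hFT.symm
          (NeWord.singleton (M := M) (i := false) g hg))
        (by rw [NeWord.append_prod, NeWord.append_prod, NeWord.prod_singleton,
            NeWord.prod_singleton]; exact this)
      exact hFT this
  -- Step 2 : any two nontrivial elements coincide
  have uniq : ∀ a b : G, a ≠ 1 → b ≠ 1 → a = b := by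
    intro a b ha hb
    by_contra hab
    have hba : b * a ≠ 1 := by
      intro hba
      exact hab (by rw [← one_mul a, ← hba, mul_assoc, sq a, mul_one])
    set x : Monoid.Coprod G G := Monoid.Coprod.inl a * Monoid.Coprod.inr b with hx
    have hφx : φ x = oF a * oT b := by rw [hx, map_mul, φl, φr]
    have hxne : x ≠ 1 := by
      intro h1
      apply neword_prod_ne_one
        (NeWord.append (NeWord.singleton (M := M) (i := false) a ha) hFT
          (NeWord.singleton (M := M) (i := true) b hb))
      rw [NeWord.append_prod, NeWord.prod_singleton, NeWord.prod_singleton, ← hφx, h1, map_one]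
    rcases h _ hxne with h2 | hc
    · apply neword_prod_ne_one
        (NeWord.append
          (NeWord.append (NeWord.singleton (M := M) (i := false) a ha) hFT
            (NeWord.singleton (M := M) (i := true) b hb)) hFT.symm
          (NeWord.append (NeWord.singleton (M := M) (i := false) a ha) hFT
            (NeWord.singleton (M := M) (i := true) b hb)))
      simp only [NeWord.append_prod, NeWord.prod_singleton]
      have e : φ (x ^ 2) = oF a * oT b * (oF a * oT b) := by
        rw [pow_two, map_mul, hφx]
      rw [← e, h2, map_one]
    · have hτx : τ x = Monoid.Coprod.inr a * Monoid.Coprod.inl b := by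
        rw [hx, map_mul, hτ₁, hτ₂]
      rw [hτx] at hc
      have hφc := congrArg φ hc
      simp only [map_mul, φl, φr, hx] at hφc
      -- oF a * oT b * (oT a * oF b) = oT a * oF b * (oF a * oT b)
      have key : oF a * oT (b * a) * oF b = oT a * oF (b * a) * oT b := by
        have e1 : oT (b * a) = oT b * oT a := map_mul oT b a
        have e2 : oF (b * a) = oF b * oF a := map_mul oF b a
        rw [e1, e2]
        calc oF a * (oT b * oT a) * oF b = oF a * oT b * (oT a * oF b) := by group
          _ = oT a * oF b * (oF a * oT b) := hφc
          _ = oT a * (oF b * oF a) * oT b := by group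
      have := neword_fst_eq_of_prod_eq
        (NeWord.append
          (NeWord.append (NeWord.singleton (M := M) (i := false) a ha) hFT
            (NeWord.singleton (M := M) (i := true) (b * a) hba)) hFT.symm
          (NeWord.singleton (M := M) (i := false) b hb))
        (NeWord.append
          (NeWord.append (NeWord.singleton (M := M) (i := true) a ha) hFT.symm
            (NeWord.singleton (M := M) (i := false) (b * a) hba)) hFT
          (NeWord.singleton (M := M) (i := true) b hb))
        (by simp only [NeWord.append_prod, NeWord.prod_singleton]; exact key)
      exact hFT this
  -- Conclusion
  obtain ⟨a, ha⟩ := exists_ne (1 : G)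
  rw [Nat.card_eq_two_iff]
  refine ⟨a, 1, ha, ?_⟩
  ext g
  simp only [Set.mem_insert_iff, Set.mem_singleton_iff, Set.mem_univ, iff_true]
  rcases eq_or_ne g 1 with rfl | hg
  · right; rfl
  · left; exact (uniq a g ha hg).symm
end

section
/- Let 𝒢 = (V,E) be a finite graph, B a unital ℂ-algebra, and (X_{ij})_{i,j∈V} a family in B satisfying relations (4.1) (i.e., X_{ij}X_{ik} = δ_{jk}X_{ij}, X_{ji}X_{ki} = δ_{jk}X_{ji}, Σ_{l∈V} X_{il} = 1 = Σ_{l∈V} X_{li}). Then the family satisfies relations (4.4) (Σ_{γ'∈E} X_{s(γ')s(γ)}X_{t(γ')t(γ)} = 1 = Σ_{γ'∈E} X_{s(γ)s(γ')}X_{t(γ)t(γ')} for all γ ∈ E) if and only if it satisfies relations (4.4)' (Σ_{k:(k,j)∈E} X_{ik} = Σ_{k:(i,k)∈E} X_{kj} and Σ_{k:(k,j)∈E} X_{ki} = Σ_{k:(i,k)∈E} X_{jk} for all i,j ∈ V). Consequently the quantum automorphism algebra A_aut(𝒢) can equivalently be presented by relations (4.1)–(4.3) together with (4.4)'. -/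
noncomputable section

variable {V : Type} [Fintype V] [DecidableEq V]

/-- Relations (4.1): `X_{ij}X_{ik} = δ_{jk}X_{ij}`, `X_{ji}X_{ki} = δ_{jk}X_{ji}`,
`Σ_l X_{il} = 1 = Σ_l X_{li}`. -/
def Rel41 (B : Type) [Ring B] (X : V → V → B) : Prop :=
  (∀ i j k : V, X i j * X i k = if j = k then X i j else 0) ∧
  (∀ i j k : V, X j i * X k i = if j = k then X j i else 0) ∧
  (∀ i : V, ∑ l : V, X i l = 1) ∧
  (∀ i : V, ∑ l : V, X l i = 1)

/-- Relations (4.4): `Σ_{γ'∈E} X_{s(γ')s(γ)}X_{t(γ')t(γ)} = 1 =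
Σ_{γ'∈E} X_{s(γ)s(γ')}X_{t(γ)t(γ')}` for every `γ ∈ E`. -/
def Rel44 (E : Finset (V × V)) (B : Type) [Ring B] (X : V → V → B) : Prop :=
  ∀ γ ∈ E, (∑ γ' ∈ E, X γ'.1 γ.1 * X γ'.2 γ.2) = 1 ∧
    (∑ γ' ∈ E, X γ.1 γ'.1 * X γ.2 γ'.2) = 1

/-- Relations (4.4)': `Σ_{k : (k,j)∈E} X_{ik} = Σ_{k : (i,k)∈E} X_{kj}` and
`Σ_{k : (k,j)∈E} X_{ki} = Σ_{k : (i,k)∈E} X_{jk}` for all `i, j`. -/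
def Rel44' (E : Finset (V × V)) (B : Type) [Ring B] (X : V → V → B) : Prop :=
  ∀ i j : V,
    (∑ k ∈ Finset.univ.filter (fun k => (k, j) ∈ E), X i k) =
      (∑ k ∈ Finset.univ.filter (fun k => (i, k) ∈ E), X k j) ∧
    (∑ k ∈ Finset.univ.filter (fun k => (k, j) ∈ E), X k i) =
      (∑ k ∈ Finset.univ.filter (fun k => (i, k) ∈ E), X j k)

/-- Let `𝒢 = (V,E)` be a finite graph, `B` a unital `ℂ`-algebra and
`(X_{ij})` a family in `B` satisfying relations (4.1).  Then the family satisfies relations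
(4.4) if and only if it satisfies relations (4.4)'.  (Hence `A_aut(𝒢)` can equivalently be
presented by relations (4.1)–(4.3) together with (4.4)'.) -/
theorem stmt_12 (E : Finset (V × V)) (B : Type) [Ring B] [Algebra ℂ B]
    (X : V → V → B) (h41 : Rel41 B X) :
    Rel44 E B X ↔ Rel44' E B X := by
  obtain ⟨hrow, hcol, hrsum, hcsum⟩ := h41
  have hsumE : ∀ g : V × V → B, ∑ γ' ∈ E, g γ' =
      ∑ k : V, ∑ l : V, if (k, l) ∈ E then g (k, l) else 0 := by
    intro g
    rw [show (∑ γ' ∈ E, g γ') = ∑ γ' : V × V, if γ' ∈ E then g γ' else 0 by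
      rw [Finset.sum_ite_mem, Finset.univ_inter], Fintype.sum_prod_type]
  constructor
  · intro h44 i j
    have Z1 : ∀ a b k l : V, (a, b) ∈ E → (k, l) ∉ E → X k a * X l b = 0 := by
      intro a b k l hab hkl
      have h1 := (h44 (a, b) hab).1
      calc X k a * X l b = X k a * (∑ γ' ∈ E, X γ'.1 a * X γ'.2 b) * X l b := by
            rw [h1, mul_one]
        _ = ∑ γ' ∈ E, X k a * (X γ'.1 a * X γ'.2 b) * X l b := by
            rw [Finset.mul_sum, Finset.sum_mul]
        _ = 0 := Finset.sum_eq_zero fun γ' hγ' => by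
            have e : X k a * (X γ'.1 a * X γ'.2 b) * X l b
                = (X k a * X γ'.1 a) * (X γ'.2 b * X l b) := by noncomm_ring
            rw [e, hcol, hcol]
            split_ifs with h h'
            · exact absurd (by rw [h, ← h']; simpa using hγ') hkl
            · simp
            · simp
            · simp
    have Z2 : ∀ a b k l : V, (a, b) ∈ E → (k, l) ∉ E → X a k * X b l = 0 := by
      intro a b k l hab hkl
      have h1 := (h44 (a, b) hab).2
      calc X a k * X b l = X a k * (∑ γ' ∈ E, X a γ'.1 * X b γ'.2) * X b l := by
            rw [h1, mul_one]
        _ = ∑ γ' ∈ E, X a k * (X a γ'.1 * X b γ'.2) * X b l := by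
            rw [Finset.mul_sum, Finset.sum_mul]
        _ = 0 := Finset.sum_eq_zero fun γ' hγ' => by
            have e : X a k * (X a γ'.1 * X b γ'.2) * X b l
                = (X a k * X a γ'.1) * (X b γ'.2 * X b l) := by noncomm_ring
            rw [e, hrow, hrow]
            split_ifs with h h'
            · exact absurd (by rw [h, ← h']; simpa using hγ') hkl
            · simp
            · simp
            · simp
    constructor
    · have hstep : ∀ l, (l, j) ∈ E →
          X i l = ∑ k ∈ Finset.univ.filter (fun k => (i, k) ∈ E), X i l * X k j := by
        intro l hl
        calc X i l = X i l * ∑ k : V, X k j := by rw [hcsum, mul_one]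
          _ = ∑ k : V, X i l * X k j := Finset.mul_sum _ _ _
          _ = _ := (Finset.sum_subset (Finset.filter_subset _ _) fun k _ hk =>
              Z1 l j i k hl (by simpa using hk)).symm
      have hstep' : ∀ k, (i, k) ∈ E →
          X k j = ∑ l ∈ Finset.univ.filter (fun l => (l, j) ∈ E), X i l * X k j := by
        intro k hk
        calc X k j = (∑ l : V, X i l) * X k j := by rw [hrsum, one_mul]
          _ = ∑ l : V, X i l * X k j := Finset.sum_mul _ _ _
          _ = _ := (Finset.sum_subset (Finset.filter_subset _ _) fun l _ hl =>
              Z2 i k l j hk (by simpa using hl)).symm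
      calc (∑ l ∈ Finset.univ.filter (fun l => (l, j) ∈ E), X i l)
          = ∑ l ∈ Finset.univ.filter (fun l => (l, j) ∈ E),
              ∑ k ∈ Finset.univ.filter (fun k => (i, k) ∈ E), X i l * X k j :=
            Finset.sum_congr rfl fun l hl => hstep l (by simpa using hl)
        _ = ∑ k ∈ Finset.univ.filter (fun k => (i, k) ∈ E),
              ∑ l ∈ Finset.univ.filter (fun l => (l, j) ∈ E), X i l * X k j :=
            Finset.sum_comm
        _ = ∑ k ∈ Finset.univ.filter (fun k => (i, k) ∈ E), X k j :=
            Finset.sum_congr rfl fun k hk => (hstep' k (by simpa using hk)).symm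
    · have hstep : ∀ l, (l, j) ∈ E →
          X l i = ∑ k ∈ Finset.univ.filter (fun k => (i, k) ∈ E), X l i * X j k := by
        intro l hl
        calc X l i = X l i * ∑ k : V, X j k := by rw [hrsum, mul_one]
          _ = ∑ k : V, X l i * X j k := Finset.mul_sum _ _ _
          _ = _ := (Finset.sum_subset (Finset.filter_subset _ _) fun k _ hk =>
              Z2 l j i k hl (by simpa using hk)).symm
      have hstep' : ∀ k, (i, k) ∈ E →
          X j k = ∑ l ∈ Finset.univ.filter (fun l => (l, j) ∈ E), X l i * X j k := by
        intro k hk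
        calc X j k = (∑ l : V, X l i) * X j k := by rw [hcsum, one_mul]
          _ = ∑ l : V, X l i * X j k := Finset.sum_mul _ _ _
          _ = _ := (Finset.sum_subset (Finset.filter_subset _ _) fun l _ hl =>
              Z1 i k l j hk (by simpa using hl)).symm
      calc (∑ l ∈ Finset.univ.filter (fun l => (l, j) ∈ E), X l i)
          = ∑ l ∈ Finset.univ.filter (fun l => (l, j) ∈ E),
              ∑ k ∈ Finset.univ.filter (fun k => (i, k) ∈ E), X l i * X j k :=
            Finset.sum_congr rfl fun l hl => hstep l (by simpa using hl)
        _ = ∑ k ∈ Finset.univ.filter (fun k => (i, k) ∈ E),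
              ∑ l ∈ Finset.univ.filter (fun l => (l, j) ∈ E), X l i * X j k :=
            Finset.sum_comm
        _ = ∑ k ∈ Finset.univ.filter (fun k => (i, k) ∈ E), X j k :=
            Finset.sum_congr rfl fun k hk => (hstep' k (by simpa using hk)).symm
  · intro h44' γ hγ
    obtain ⟨c, d⟩ := γ
    constructor
    · rw [hsumE]
      have key : ∀ k : V, (∑ l : V, if (k, l) ∈ E then X k c * X l d else 0)
          = X k c := by
        intro k
        calc (∑ l : V, if (k, l) ∈ E then X k c * X l d else 0)
            = X k c * ∑ l ∈ Finset.univ.filter (fun l => (k, l) ∈ E), X l d := by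
              rw [Finset.mul_sum, Finset.sum_filter]
          _ = X k c * ∑ l ∈ Finset.univ.filter (fun l => (l, d) ∈ E), X k l := by
              rw [(h44' k d).1]
          _ = ∑ l ∈ Finset.univ.filter (fun l => (l, d) ∈ E), X k c * X k l :=
              Finset.mul_sum _ _ _
          _ = X k c := by
              rw [Finset.sum_congr rfl fun l _ => hrow k c l, Finset.sum_ite_eq]
              simp [hγ]
      rw [Finset.sum_congr rfl fun k _ => key k, hcsum]
    · rw [hsumE]
      have key : ∀ k : V, (∑ l : V, if (k, l) ∈ E then X c k * X d l else 0)
          = X c k := by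
        intro k
        calc (∑ l : V, if (k, l) ∈ E then X c k * X d l else 0)
            = X c k * ∑ l ∈ Finset.univ.filter (fun l => (k, l) ∈ E), X d l := by
              rw [Finset.mul_sum, Finset.sum_filter]
          _ = X c k * ∑ l ∈ Finset.univ.filter (fun l => (l, d) ∈ E), X l k := by
              rw [(h44' k d).2]
          _ = ∑ l ∈ Finset.univ.filter (fun l => (l, d) ∈ E), X c k * X l k :=
              Finset.mul_sum _ _ _
          _ = X c k := by
              rw [Finset.sum_congr rfl fun l _ => hcol k c l, Finset.sum_ite_eq]
              simp [hγ]
      rw [Finset.sum_congr rfl fun k _ => key k, hrsum]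
end
end

section
/- Let 𝒢_1, …, 𝒢_n be finite connected graphs with pairwise disjoint vertex sets V_1, …, V_n, and let 𝒢 be their disjoint union. Let B be a unital ℂ-algebra and (X_{uv})_{u,v ∈ V(𝒢)} a family in B satisfying the graph relations (4.1)–(4.4) for 𝒢. For k,l ∈ {1,…,n} and i ∈ V_l set P_i^{kl} = Σ_{u∈V_k} X_{ui}. Then: (a) P_i^{kl} = P_j^{kl} for all i,j ∈ V_l (so one may write P^{kl} for this common value); (b) P^{kl}P^{k'l} = δ_{kk'}P^{kl} for all k,k',l; (c) Σ_{k=1}^n P^{kl} = 1 for all l. -/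
noncomputable section

variable {V : Type} [Fintype V] [DecidableEq V]

/-- Relations (4.2). -/
def Rel42 (E : Finset (V × V)) (B : Type) [Ring B] (X : V → V → B) : Prop :=
  ∀ γ ∈ E, ∀ i k : V, (i, k) ∉ E →
    X γ.1 i * X γ.2 k = 0 ∧ X γ.2 k * X γ.1 i = 0 ∧
    X i γ.1 * X k γ.2 = 0 ∧ X k γ.2 * X i γ.1 = 0

/-- Relations (4.3). -/
def Rel43 (E : Finset (V × V)) (B : Type) [Ring B] (X : V → V → B) : Prop :=
  ∀ γ ∈ E, ∀ γ' ∈ E, X γ.1 γ'.1 * X γ.2 γ'.2 = X γ.2 γ'.2 * X γ.1 γ'.1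

/-- Adjacency (an edge traversed in either direction). -/
def Adj (E : Finset (V × V)) (u v : V) : Prop := (u, v) ∈ E ∨ (v, u) ∈ E

lemma aux_edge (n : ℕ) (c : V → Fin n) (E : Finset (V × V))
    (hcomp : ∀ γ ∈ E, c γ.1 = c γ.2)
    (B : Type) [Ring B] (X : V → V → B)
    (h41 : Rel41 B X) (h44 : Rel44 E B X) (i j : V) (hij : (i, j) ∈ E) (k : Fin n) :
    (∑ u ∈ Finset.univ.filter (fun u => c u = k), X u i) =
      ∑ u ∈ Finset.univ.filter (fun u => c u = k), X u j := by
  obtain ⟨h1, h2, h3, h4⟩ := h41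
  have hone : (∑ γ' ∈ E, X γ'.1 i * X γ'.2 j) = 1 := (h44 (i, j) hij).1
  have lhs : (∑ u ∈ Finset.univ.filter (fun u => c u = k), X u i) *
      (∑ γ' ∈ E, X γ'.1 i * X γ'.2 j)
      = ∑ γ' ∈ E, if c γ'.1 = k then X γ'.1 i * X γ'.2 j else 0 := by
    rw [Finset.sum_mul_sum, Finset.sum_comm]
    refine Finset.sum_congr rfl fun γ' _ => ?_
    have heq : ∀ u, X u i * (X γ'.1 i * X γ'.2 j) =
        (if u = γ'.1 then X u i else 0) * X γ'.2 j := fun u => by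
      rw [← mul_assoc, h2 i u γ'.1]
    simp_rw [heq, ite_mul, zero_mul]
    rw [Finset.sum_ite_eq' (Finset.univ.filter (fun u => c u = k)) γ'.1
      (fun u => X u i * X γ'.2 j)]
    simp [Finset.mem_filter]
  have rhs : (∑ γ' ∈ E, X γ'.1 i * X γ'.2 j) *
      (∑ u ∈ Finset.univ.filter (fun u => c u = k), X u j)
      = ∑ γ' ∈ E, if c γ'.2 = k then X γ'.1 i * X γ'.2 j else 0 := by
    rw [Finset.sum_mul_sum]
    refine Finset.sum_congr rfl fun γ' _ => ?_
    have heq : ∀ u, X γ'.1 i * X γ'.2 j * X u j =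
        X γ'.1 i * (if γ'.2 = u then X γ'.2 j else 0) := fun u => by
      rw [mul_assoc, h2 j γ'.2 u]
    simp_rw [heq, mul_ite, mul_zero]
    rw [Finset.sum_ite_eq (Finset.univ.filter (fun u => c u = k)) γ'.2
      (fun _ => X γ'.1 i * X γ'.2 j)]
    simp [Finset.mem_filter]
  calc (∑ u ∈ Finset.univ.filter (fun u => c u = k), X u i)
      = (∑ u ∈ Finset.univ.filter (fun u => c u = k), X u i) *
        (∑ γ' ∈ E, X γ'.1 i * X γ'.2 j) := by rw [hone, mul_one]
    _ = ∑ γ' ∈ E, if c γ'.1 = k then X γ'.1 i * X γ'.2 j else 0 := lhs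
    _ = ∑ γ' ∈ E, if c γ'.2 = k then X γ'.1 i * X γ'.2 j else 0 :=
        Finset.sum_congr rfl fun γ' hγ' => by rw [hcomp γ' hγ']
    _ = (∑ γ' ∈ E, X γ'.1 i * X γ'.2 j) *
        (∑ u ∈ Finset.univ.filter (fun u => c u = k), X u j) := rhs.symm
    _ = _ := by rw [hone, one_mul]

/-- Let `𝒢` be the disjoint union of finite connected graphs
`𝒢_1, …, 𝒢_n` (here: a finite graph with a map `c` to `Fin n` such that edges stay within
fibers and each fiber is connected, the fibers being the vertex sets `V_1, …, V_n`).  Let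
`(X_{uv})` satisfy the graph relations (4.1)–(4.4) in a unital `ℂ`-algebra `B`, and for
`i ∈ V_l` put `P_i^{kl} = Σ_{u ∈ V_k} X_{ui}`.  Then (a) `P_i^{kl} = P_j^{kl}` for
`i, j ∈ V_l`; (b) `P^{kl}P^{k'l} = δ_{kk'}P^{kl}`; (c) `Σ_k P^{kl} = 1`. -/
theorem stmt_13 (n : ℕ) (c : V → Fin n) (E : Finset (V × V))
    (hcomp : ∀ γ ∈ E, c γ.1 = c γ.2)
    (hconn : ∀ u v : V, c u = c v → Relation.ReflTransGen (Adj E) u v)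
    (B : Type) [Ring B] [Algebra ℂ B] (X : V → V → B)
    (h41 : Rel41 B X) (h42 : Rel42 E B X) (h43 : Rel43 E B X) (h44 : Rel44 E B X) :
    (∀ (k : Fin n) (i j : V), c i = c j →
      (∑ u ∈ Finset.univ.filter (fun u => c u = k), X u i) =
        (∑ u ∈ Finset.univ.filter (fun u => c u = k), X u j)) ∧
    (∀ (k k' : Fin n) (i : V),
      (∑ u ∈ Finset.univ.filter (fun u => c u = k), X u i) *
          (∑ u ∈ Finset.univ.filter (fun u => c u = k'), X u i) =
        if k = k' then ∑ u ∈ Finset.univ.filter (fun u => c u = k), X u i else 0) ∧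
    (∀ i : V, ∑ k : Fin n, ∑ u ∈ Finset.univ.filter (fun u => c u = k), X u i = 1) := by
  obtain ⟨h1, h2, h3, h4⟩ := h41
  refine ⟨?_, ?_, ?_⟩
  · intro k i j hcij
    have hrt := hconn i j hcij
    clear hcij
    induction hrt with
    | refl => rfl
    | tail _ hadj ih =>
      rcases hadj with h | h
      · exact ih.trans (aux_edge n c E hcomp B X ⟨h1, h2, h3, h4⟩ h44 _ _ h k)
      · exact ih.trans (aux_edge n c E hcomp B X ⟨h1, h2, h3, h4⟩ h44 _ _ h k).symm
  · intro k k' i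
    rw [Finset.sum_mul_sum]
    simp_rw [h2 i]
    have step : ∀ u : V,
        (∑ v ∈ Finset.univ.filter (fun v => c v = k'), if u = v then X u i else 0)
          = if c u = k' then X u i else 0 := fun u => by
      rw [Finset.sum_ite_eq (Finset.univ.filter (fun v => c v = k')) u (fun _ => X u i)]
      simp [Finset.mem_filter]
    simp_rw [step]
    by_cases hkk : k = k'
    · subst hkk
      simp only [if_pos rfl]
      refine Finset.sum_congr rfl fun u hu => ?_
      rw [if_pos (Finset.mem_filter.mp hu).2]
    · rw [if_neg hkk]
      refine Finset.sum_eq_zero fun u hu => ?_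
      rw [if_neg]
      intro h
      exact hkk ((Finset.mem_filter.mp hu).2.symm.trans h ▸ rfl)
  · intro i
    rw [Finset.sum_fiberwise Finset.univ c (fun u => X u i)]
    exact h4 i
end
end

section
/- Let 𝒢_1, …, 𝒢_n be finite connected graphs with pairwise disjoint vertex sets V_1, …, V_n, let 𝒢 be their disjoint union, let B be a unital ℂ-algebra, and let (X_{uv})_{u,v ∈ V(𝒢)} be a family in B satisfying the graph relations (4.1)–(4.4) for 𝒢. Let k,l ∈ {1,…,n}, let i ∈ V_k, let i' be a vertex of 𝒢 with i' ∉ V_k, and let j,j' ∈ V_l. Then X_{ij}X_{i'j'} = 0 = X_{i'j'}X_{ij} and X_{ji}X_{j'i'} = 0 = X_{j'i'}X_{ji}. -/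
noncomputable section

variable {V : Type} [Fintype V] [DecidableEq V]

lemma keyA {n : ℕ} (c : V → Fin n) (E : Finset (V × V))
    (hcomp : ∀ γ ∈ E, c γ.1 = c γ.2)
    {B : Type} [Ring B] (X : V → V → B)
    (h41 : Rel41 B X) (h43 : Rel43 E B X) (h44 : Rel44 E B X)
    {j j' : V} (hpath : Relation.ReflTransGen (Adj E) j j') :
    ∀ i i' : V, c i ≠ c i' → X i j * X i' j' = 0 := by
  induction hpath with
  | refl =>
      intro i i' hne
      rw [h41.2.1 j i i', if_neg (fun h => hne (by rw [h]))]
  | @tail b j2 hjb hadj ih =>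
      intro i i' hne
      rcases hadj with hE | hE
      · -- (b, j2) ∈ E
        have hsum := (h44 (b, j2) hE).1
        calc X i j * X i' j2
            = X i j * (∑ γ' ∈ E, X γ'.1 b * X γ'.2 j2) * X i' j2 := by
              rw [hsum, mul_one]
          _ = ∑ γ' ∈ E, X i j * (X γ'.1 b * X γ'.2 j2) * X i' j2 := by
              rw [Finset.mul_sum, Finset.sum_mul]
          _ = 0 := by
              apply Finset.sum_eq_zero
              intro γ' hγ'
              rw [mul_assoc, mul_assoc, h41.2.1 j2 γ'.2 i']
              split_ifs with h
              · have hc : c i ≠ c γ'.1 := by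
                  rw [hcomp γ' hγ', h]; exact hne
                rw [← mul_assoc, ih i γ'.1 hc, zero_mul]
              · simp
      · -- (j2, b) ∈ E
        have hsum := (h44 (j2, b) hE).1
        calc X i j * X i' j2
            = X i j * X i' j2 * (∑ γ' ∈ E, X γ'.1 j2 * X γ'.2 b) := by
              rw [hsum, mul_one]
          _ = ∑ γ' ∈ E, X i j * X i' j2 * (X γ'.1 j2 * X γ'.2 b) := by
              rw [Finset.mul_sum]
          _ = 0 := by
              apply Finset.sum_eq_zero
              intro γ' hγ'
              rw [mul_assoc, ← mul_assoc (X i' j2), h41.2.1 j2 i' γ'.1]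
              split_ifs with h
              · have hcomm := h43 γ' hγ' (j2, b) hE
                rw [← h] at hcomm
                have hc : c i ≠ c γ'.2 := by
                  rw [← hcomp γ' hγ', ← h]; exact hne
                rw [hcomm, ← mul_assoc]
                show X i j * X γ'.2 b * X i' j2 = 0
                rw [ih i γ'.2 hc, zero_mul]
              · simp

/-- With `𝒢` the disjoint union of finite connected graphs `𝒢_1, …, 𝒢_n`
(encoded by a component map `c` as in Statement 13) and `(X_{uv})` satisfying the graph
relations (4.1)–(4.4): if `i ∈ V_k`, `i' ∉ V_k` and `j, j' ∈ V_l`, then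
`X_{ij}X_{i'j'} = 0 = X_{i'j'}X_{ij}` and `X_{ji}X_{j'i'} = 0 = X_{j'i'}X_{ji}`. -/
theorem stmt_14 (n : ℕ) (c : V → Fin n) (E : Finset (V × V))
    (hcomp : ∀ γ ∈ E, c γ.1 = c γ.2)
    (hconn : ∀ u v : V, c u = c v → Relation.ReflTransGen (Adj E) u v)
    (B : Type) [Ring B] [Algebra ℂ B] (X : V → V → B)
    (h41 : Rel41 B X) (h42 : Rel42 E B X) (h43 : Rel43 E B X) (h44 : Rel44 E B X)
    (i i' j j' : V) (hii' : c i' ≠ c i) (hjj' : c j = c j') :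
    X i j * X i' j' = 0 ∧ X i' j' * X i j = 0 ∧
    X j i * X j' i' = 0 ∧ X j' i' * X j i = 0 := by
  -- transposed family
  set Y : V → V → B := fun u v => X v u with hY
  have h41' : Rel41 B Y := ⟨fun a b k => h41.2.1 a b k, fun a b k => h41.1 a b k,
    h41.2.2.2, h41.2.2.1⟩
  have h43' : Rel43 E B Y := fun γ hγ γ' hγ' => h43 γ' hγ' γ hγ
  have h44' : Rel44 E B Y := fun γ hγ => ⟨(h44 γ hγ).2, (h44 γ hγ).1⟩
  refine ⟨?_, ?_, ?_, ?_⟩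
  · exact keyA c E hcomp X h41 h43 h44 (hconn j j' hjj') i i' (Ne.symm hii')
  · exact keyA c E hcomp X h41 h43 h44 (hconn j' j hjj'.symm) i' i hii'
  · exact keyA c E hcomp Y h41' h43' h44' (hconn j j' hjj') i i' (Ne.symm hii')
  · exact keyA c E hcomp Y h41' h43' h44' (hconn j' j hjj'.symm) i' i hii'
end
end

section
/- Let 𝒢 = (V,E) be a finite graph (not necessarily connected) and n ≥ 1. There exists a unique algebra homomorphism Φ : A_aut(𝒢^{⊔n}) → W(𝒢,n) satisfying Φ(X_{(k,i),(l,j)}) = u^k_{ij}·x_{kl} for all 1 ≤ k,l ≤ n and i,j ∈ V. -/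
noncomputable section

/-- The graph relations (4.1)–(4.4) presenting the quantum automorphism algebra
`A_aut(𝒢)` of a finite graph `𝒢 = (V, E)`, as relations on the free algebra on the
generators `X_{ij}` (`i, j ∈ V`). -/
inductive GraphRel (V : Type) [Fintype V] [DecidableEq V] (E : Finset (V × V)) :
    FreeAlgebra ℂ (V × V) → FreeAlgebra ℂ (V × V) → Prop
  | r1row (i j k : V) :
      GraphRel V E (FreeAlgebra.ι ℂ (i, j) * FreeAlgebra.ι ℂ (i, k))
        (if j = k then FreeAlgebra.ι ℂ (i, j) else 0)
  | r1col (i j k : V) :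
      GraphRel V E (FreeAlgebra.ι ℂ (j, i) * FreeAlgebra.ι ℂ (k, i))
        (if j = k then FreeAlgebra.ι ℂ (j, i) else 0)
  | r1rowSum (i : V) : GraphRel V E (∑ l : V, FreeAlgebra.ι ℂ (i, l)) 1
  | r1colSum (i : V) : GraphRel V E (∑ l : V, FreeAlgebra.ι ℂ (l, i)) 1
  | r2a (γ : V × V) (hγ : γ ∈ E) (i k : V) (h : (i, k) ∉ E) :
      GraphRel V E (FreeAlgebra.ι ℂ (γ.1, i) * FreeAlgebra.ι ℂ (γ.2, k)) 0
  | r2a' (γ : V × V) (hγ : γ ∈ E) (i k : V) (h : (i, k) ∉ E) :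
      GraphRel V E (FreeAlgebra.ι ℂ (γ.2, k) * FreeAlgebra.ι ℂ (γ.1, i)) 0
  | r2b (γ : V × V) (hγ : γ ∈ E) (i k : V) (h : (i, k) ∉ E) :
      GraphRel V E (FreeAlgebra.ι ℂ (i, γ.1) * FreeAlgebra.ι ℂ (k, γ.2)) 0
  | r2b' (γ : V × V) (hγ : γ ∈ E) (i k : V) (h : (i, k) ∉ E) :
      GraphRel V E (FreeAlgebra.ι ℂ (k, γ.2) * FreeAlgebra.ι ℂ (i, γ.1)) 0
  | r3 (γ γ' : V × V) (hγ : γ ∈ E) (hγ' : γ' ∈ E) :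
      GraphRel V E (FreeAlgebra.ι ℂ (γ.1, γ'.1) * FreeAlgebra.ι ℂ (γ.2, γ'.2))
        (FreeAlgebra.ι ℂ (γ.2, γ'.2) * FreeAlgebra.ι ℂ (γ.1, γ'.1))
  | r4a (γ : V × V) (hγ : γ ∈ E) :
      GraphRel V E (∑ γ' ∈ E, FreeAlgebra.ι ℂ (γ'.1, γ.1) * FreeAlgebra.ι ℂ (γ'.2, γ.2)) 1
  | r4b (γ : V × V) (hγ : γ ∈ E) :
      GraphRel V E (∑ γ' ∈ E, FreeAlgebra.ι ℂ (γ.1, γ'.1) * FreeAlgebra.ι ℂ (γ.2, γ'.2)) 1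

/-- The quantum automorphism algebra `A_aut(𝒢)` of the finite graph `𝒢 = (V, E)`. -/
abbrev AAut (V : Type) [Fintype V] [DecidableEq V] (E : Finset (V × V)) : Type :=
  RingQuot (GraphRel V E)

/-- The generators `X_{ij}` of `A_aut(𝒢)`. -/
def XA (V : Type) [Fintype V] [DecidableEq V] (E : Finset (V × V)) (i j : V) : AAut V E :=
  RingQuot.mkAlgHom ℂ (GraphRel V E) (FreeAlgebra.ι ℂ (i, j))

/-- The edge set of the `n`-fold disjoint union `𝒢^{⊔n}` of `𝒢 = (V, E)`, on the vertex
set `Fin n × V`. -/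
def unionEdges (V : Type) [Fintype V] [DecidableEq V] (E : Finset (V × V)) (n : ℕ) :
    Finset ((Fin n × V) × (Fin n × V)) :=
  (Finset.univ ×ˢ E).image fun p => ((p.1, p.2.1), (p.1, p.2.2))

/-- Relations presenting `W(𝒢,n) = A_aut(𝒢) *_w 𝒜_t(n)`: generators `Sum.inl (k, i, j)`
(the elements `u^k_{ij}`) and `Sum.inr (k, l)` (the elements `x_{kl}`); for each `k` the
family `u^k` satisfies the graph relations for `𝒢`, the `x_{kl}` satisfy the magic unitary
relations of `𝒜_t(n)`, and `u^k_{ij} x_{kl} = x_{kl} u^k_{ij}`. -/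
inductive WRel (V : Type) [Fintype V] [DecidableEq V] (E : Finset (V × V)) (n : ℕ) :
    FreeAlgebra ℂ ((Fin n × V × V) ⊕ (Fin n × Fin n)) →
      FreeAlgebra ℂ ((Fin n × V × V) ⊕ (Fin n × Fin n)) → Prop
  | u1row (m : Fin n) (i j k : V) :
      WRel V E n (FreeAlgebra.ι ℂ (Sum.inl (m, i, j)) * FreeAlgebra.ι ℂ (Sum.inl (m, i, k)))
        (if j = k then FreeAlgebra.ι ℂ (Sum.inl (m, i, j)) else 0)
  | u1col (m : Fin n) (i j k : V) :
      WRel V E n (FreeAlgebra.ι ℂ (Sum.inl (m, j, i)) * FreeAlgebra.ι ℂ (Sum.inl (m, k, i)))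
        (if j = k then FreeAlgebra.ι ℂ (Sum.inl (m, j, i)) else 0)
  | u1rowSum (m : Fin n) (i : V) :
      WRel V E n (∑ l : V, FreeAlgebra.ι ℂ (Sum.inl (m, i, l))) 1
  | u1colSum (m : Fin n) (i : V) :
      WRel V E n (∑ l : V, FreeAlgebra.ι ℂ (Sum.inl (m, l, i))) 1
  | u2a (m : Fin n) (γ : V × V) (hγ : γ ∈ E) (i k : V) (h : (i, k) ∉ E) :
      WRel V E n (FreeAlgebra.ι ℂ (Sum.inl (m, γ.1, i)) * FreeAlgebra.ι ℂ (Sum.inl (m, γ.2, k))) 0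
  | u2a' (m : Fin n) (γ : V × V) (hγ : γ ∈ E) (i k : V) (h : (i, k) ∉ E) :
      WRel V E n (FreeAlgebra.ι ℂ (Sum.inl (m, γ.2, k)) * FreeAlgebra.ι ℂ (Sum.inl (m, γ.1, i))) 0
  | u2b (m : Fin n) (γ : V × V) (hγ : γ ∈ E) (i k : V) (h : (i, k) ∉ E) :
      WRel V E n (FreeAlgebra.ι ℂ (Sum.inl (m, i, γ.1)) * FreeAlgebra.ι ℂ (Sum.inl (m, k, γ.2))) 0
  | u2b' (m : Fin n) (γ : V × V) (hγ : γ ∈ E) (i k : V) (h : (i, k) ∉ E) :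
      WRel V E n (FreeAlgebra.ι ℂ (Sum.inl (m, k, γ.2)) * FreeAlgebra.ι ℂ (Sum.inl (m, i, γ.1))) 0
  | u3 (m : Fin n) (γ γ' : V × V) (hγ : γ ∈ E) (hγ' : γ' ∈ E) :
      WRel V E n (FreeAlgebra.ι ℂ (Sum.inl (m, γ.1, γ'.1)) * FreeAlgebra.ι ℂ (Sum.inl (m, γ.2, γ'.2)))
        (FreeAlgebra.ι ℂ (Sum.inl (m, γ.2, γ'.2)) * FreeAlgebra.ι ℂ (Sum.inl (m, γ.1, γ'.1)))
  | u4a (m : Fin n) (γ : V × V) (hγ : γ ∈ E) :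
      WRel V E n
        (∑ γ' ∈ E, FreeAlgebra.ι ℂ (Sum.inl (m, γ'.1, γ.1)) * FreeAlgebra.ι ℂ (Sum.inl (m, γ'.2, γ.2))) 1
  | u4b (m : Fin n) (γ : V × V) (hγ : γ ∈ E) :
      WRel V E n
        (∑ γ' ∈ E, FreeAlgebra.ι ℂ (Sum.inl (m, γ.1, γ'.1)) * FreeAlgebra.ι ℂ (Sum.inl (m, γ.2, γ'.2))) 1
  | xrow (k l l' : Fin n) :
      WRel V E n (FreeAlgebra.ι ℂ (Sum.inr (k, l)) * FreeAlgebra.ι ℂ (Sum.inr (k, l')))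
        (if l = l' then FreeAlgebra.ι ℂ (Sum.inr (k, l)) else 0)
  | xcol (k l l' : Fin n) :
      WRel V E n (FreeAlgebra.ι ℂ (Sum.inr (l, k)) * FreeAlgebra.ι ℂ (Sum.inr (l', k)))
        (if l = l' then FreeAlgebra.ι ℂ (Sum.inr (l, k)) else 0)
  | xrowSum (k : Fin n) : WRel V E n (∑ l : Fin n, FreeAlgebra.ι ℂ (Sum.inr (k, l))) 1
  | xcolSum (k : Fin n) : WRel V E n (∑ l : Fin n, FreeAlgebra.ι ℂ (Sum.inr (l, k))) 1
  | comm (k l : Fin n) (i j : V) :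
      WRel V E n (FreeAlgebra.ι ℂ (Sum.inl (k, i, j)) * FreeAlgebra.ι ℂ (Sum.inr (k, l)))
        (FreeAlgebra.ι ℂ (Sum.inr (k, l)) * FreeAlgebra.ι ℂ (Sum.inl (k, i, j)))

/-- The algebra `W(𝒢,n)`, a presentation of the free wreath product
`A_aut(𝒢) *_w 𝒜_t(n)`. -/
abbrev WAlg (V : Type) [Fintype V] [DecidableEq V] (E : Finset (V × V)) (n : ℕ) : Type :=
  RingQuot (WRel V E n)

/-- The generators `u^k_{ij}` of `W(𝒢,n)`. -/
def wu (V : Type) [Fintype V] [DecidableEq V] (E : Finset (V × V)) (n : ℕ)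
    (k : Fin n) (i j : V) : WAlg V E n :=
  RingQuot.mkAlgHom ℂ (WRel V E n) (FreeAlgebra.ι ℂ (Sum.inl (k, i, j)))

/-- The generators `x_{kl}` of `W(𝒢,n)`. -/
def wxg (V : Type) [Fintype V] [DecidableEq V] (E : Finset (V × V)) (n : ℕ)
    (k l : Fin n) : WAlg V E n :=
  RingQuot.mkAlgHom ℂ (WRel V E n) (FreeAlgebra.ι ℂ (Sum.inr (k, l)))

namespace Stmt15Aux

variable (V : Type) [Fintype V] [DecidableEq V] (E : Finset (V × V)) (n : ℕ)

lemma wu_mul_row (m : Fin n) (i j k : V) :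
    wu V E n m i j * wu V E n m i k = if j = k then wu V E n m i j else 0 := by
  have h := RingQuot.mkAlgHom_rel ℂ (WRel.u1row (V := V) (E := E) (n := n) m i j k)
  simpa [wu, map_mul, apply_ite (RingQuot.mkAlgHom ℂ (WRel V E n))] using h

lemma wu_mul_col (m : Fin n) (i j k : V) :
    wu V E n m j i * wu V E n m k i = if j = k then wu V E n m j i else 0 := by
  have h := RingQuot.mkAlgHom_rel ℂ (WRel.u1col (V := V) (E := E) (n := n) m i j k)
  simpa [wu, map_mul, apply_ite (RingQuot.mkAlgHom ℂ (WRel V E n))] using h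

lemma wu_rowSum (m : Fin n) (i : V) : ∑ j : V, wu V E n m i j = 1 := by
  have h := RingQuot.mkAlgHom_rel ℂ (WRel.u1rowSum (V := V) (E := E) (n := n) m i)
  simpa [wu, map_sum] using h

lemma wu_colSum (m : Fin n) (i : V) : ∑ j : V, wu V E n m j i = 1 := by
  have h := RingQuot.mkAlgHom_rel ℂ (WRel.u1colSum (V := V) (E := E) (n := n) m i)
  simpa [wu, map_sum] using h

lemma wu_e2a (m : Fin n) (γ : V × V) (hγ : γ ∈ E) (i k : V) (h : (i, k) ∉ E) :
    wu V E n m γ.1 i * wu V E n m γ.2 k = 0 := by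
  have h2 := RingQuot.mkAlgHom_rel ℂ (WRel.u2a (V := V) (E := E) (n := n) m γ hγ i k h)
  simpa [wu, map_mul] using h2

lemma wu_e2a' (m : Fin n) (γ : V × V) (hγ : γ ∈ E) (i k : V) (h : (i, k) ∉ E) :
    wu V E n m γ.2 k * wu V E n m γ.1 i = 0 := by
  have h2 := RingQuot.mkAlgHom_rel ℂ (WRel.u2a' (V := V) (E := E) (n := n) m γ hγ i k h)
  simpa [wu, map_mul] using h2

lemma wu_e2b (m : Fin n) (γ : V × V) (hγ : γ ∈ E) (i k : V) (h : (i, k) ∉ E) :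
    wu V E n m i γ.1 * wu V E n m k γ.2 = 0 := by
  have h2 := RingQuot.mkAlgHom_rel ℂ (WRel.u2b (V := V) (E := E) (n := n) m γ hγ i k h)
  simpa [wu, map_mul] using h2

lemma wu_e2b' (m : Fin n) (γ : V × V) (hγ : γ ∈ E) (i k : V) (h : (i, k) ∉ E) :
    wu V E n m k γ.2 * wu V E n m i γ.1 = 0 := by
  have h2 := RingQuot.mkAlgHom_rel ℂ (WRel.u2b' (V := V) (E := E) (n := n) m γ hγ i k h)
  simpa [wu, map_mul] using h2

lemma wu_e3 (m : Fin n) (γ γ' : V × V) (hγ : γ ∈ E) (hγ' : γ' ∈ E) :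
    wu V E n m γ.1 γ'.1 * wu V E n m γ.2 γ'.2 = wu V E n m γ.2 γ'.2 * wu V E n m γ.1 γ'.1 := by
  have h2 := RingQuot.mkAlgHom_rel ℂ (WRel.u3 (V := V) (E := E) (n := n) m γ γ' hγ hγ')
  simpa [wu, map_mul] using h2

lemma wu_e4a (m : Fin n) (γ : V × V) (hγ : γ ∈ E) :
    ∑ γ' ∈ E, wu V E n m γ'.1 γ.1 * wu V E n m γ'.2 γ.2 = 1 := by
  have h2 := RingQuot.mkAlgHom_rel ℂ (WRel.u4a (V := V) (E := E) (n := n) m γ hγ)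
  simpa [wu, map_sum, map_mul] using h2

lemma wu_e4b (m : Fin n) (γ : V × V) (hγ : γ ∈ E) :
    ∑ γ' ∈ E, wu V E n m γ.1 γ'.1 * wu V E n m γ.2 γ'.2 = 1 := by
  have h2 := RingQuot.mkAlgHom_rel ℂ (WRel.u4b (V := V) (E := E) (n := n) m γ hγ)
  simpa [wu, map_sum, map_mul] using h2

lemma wx_row (k l l' : Fin n) :
    wxg V E n k l * wxg V E n k l' = if l = l' then wxg V E n k l else 0 := by
  have h := RingQuot.mkAlgHom_rel ℂ (WRel.xrow (V := V) (E := E) (n := n) k l l')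
  simpa [wxg, map_mul, apply_ite (RingQuot.mkAlgHom ℂ (WRel V E n))] using h

lemma wx_col (k l l' : Fin n) :
    wxg V E n l k * wxg V E n l' k = if l = l' then wxg V E n l k else 0 := by
  have h := RingQuot.mkAlgHom_rel ℂ (WRel.xcol (V := V) (E := E) (n := n) k l l')
  simpa [wxg, map_mul, apply_ite (RingQuot.mkAlgHom ℂ (WRel V E n))] using h

lemma wx_rowSum (k : Fin n) : ∑ l : Fin n, wxg V E n k l = 1 := by
  have h := RingQuot.mkAlgHom_rel ℂ (WRel.xrowSum (V := V) (E := E) (n := n) k)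
  simpa [wxg, map_sum] using h

lemma wx_colSum (k : Fin n) : ∑ l : Fin n, wxg V E n l k = 1 := by
  have h := RingQuot.mkAlgHom_rel ℂ (WRel.xcolSum (V := V) (E := E) (n := n) k)
  simpa [wxg, map_sum] using h

lemma wux_comm (k l : Fin n) (i j : V) :
    wu V E n k i j * wxg V E n k l = wxg V E n k l * wu V E n k i j := by
  have h := RingQuot.mkAlgHom_rel ℂ (WRel.comm (V := V) (E := E) (n := n) k l i j)
  simpa [wu, wxg, map_mul] using h

lemma Y_mul_same (m l l' : Fin n) (i j i' j' : V) :
    (wu V E n m i j * wxg V E n m l) * (wu V E n m i' j' * wxg V E n m l') =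
      (wu V E n m i j * wu V E n m i' j') * (wxg V E n m l * wxg V E n m l') := by
  rw [mul_assoc, ← mul_assoc (wxg V E n m l), ← wux_comm, mul_assoc, ← mul_assoc, ← mul_assoc]

lemma Y_mul_ne (m m' : Fin n) (h : m ≠ m') (l : Fin n) (i j i' j' : V) :
    (wu V E n m i j * wxg V E n m l) * (wu V E n m' i' j' * wxg V E n m' l) = 0 := by
  rw [mul_assoc, wux_comm V E n m' l i' j', ← mul_assoc (wxg V E n m l), wx_col, if_neg h,
    zero_mul, mul_zero]

lemma mem_unionEdges_iff (γ : (Fin n × V) × (Fin n × V)) :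
    γ ∈ unionEdges V E n ↔ γ.1.1 = γ.2.1 ∧ (γ.1.2, γ.2.2) ∈ E := by
  obtain ⟨⟨m, a⟩, ⟨m', b⟩⟩ := γ
  simp only [unionEdges, Finset.mem_image, Finset.mem_product, Finset.mem_univ, true_and,
    Prod.mk.injEq, Prod.exists]
  constructor
  · rintro ⟨q, c, d, hq, ⟨h1, h2⟩, h3, h4⟩
    subst h1; subst h2; subst h3; subst h4
    exact ⟨rfl, hq⟩
  · rintro ⟨rfl, hab⟩
    exact ⟨m, a, b, hab, ⟨rfl, rfl⟩, rfl, rfl⟩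

lemma sum_unionEdges (g : (Fin n × V) × (Fin n × V) → WAlg V E n) :
    ∑ γ ∈ unionEdges V E n, g γ =
      ∑ q ∈ Finset.univ ×ˢ E, g ((q.1, q.2.1), (q.1, q.2.2)) := by
  rw [unionEdges, Finset.sum_image]
  intro p _ q _ h
  simp only [Prod.mk.injEq] at h
  obtain ⟨⟨h1, h2⟩, _, h3⟩ := h
  exact Prod.ext h1 (Prod.ext h2 h3)

/-- The image of the generator `X_{(k,i),(l,j)}`. -/
def Gmap (p : (Fin n × V) × (Fin n × V)) : WAlg V E n :=
  wu V E n p.1.1 p.1.2 p.2.2 * wxg V E n p.1.1 p.2.1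

/-- The lift of `Gmap` to the free algebra. -/
def fHom : FreeAlgebra ℂ ((Fin n × V) × (Fin n × V)) →ₐ[ℂ] WAlg V E n :=
  FreeAlgebra.lift ℂ (Gmap V E n)

lemma fHom_ι (p : (Fin n × V) × (Fin n × V)) :
    fHom V E n (FreeAlgebra.ι ℂ p) = Gmap V E n p := by
  simp [fHom]

lemma compat ⦃a b : FreeAlgebra ℂ ((Fin n × V) × (Fin n × V))⦄
    (h : GraphRel (Fin n × V) (unionEdges V E n) a b) : fHom V E n a = fHom V E n b := by
  induction h with
  | r1row I J K =>
    obtain ⟨k, i⟩ := I; obtain ⟨l, j⟩ := J; obtain ⟨l', j'⟩ := K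
    simp only [map_mul, fHom_ι, apply_ite (fHom V E n), map_zero, Gmap]
    rw [Y_mul_same, wu_mul_row, wx_row]
    by_cases hl : l = l' <;> by_cases hj : j = j' <;>
      simp [hl, hj, Prod.ext_iff]
  | r1col I J K =>
    obtain ⟨k, i⟩ := I; obtain ⟨l, j⟩ := J; obtain ⟨l', j'⟩ := K
    simp only [map_mul, fHom_ι, apply_ite (fHom V E n), map_zero, Gmap]
    by_cases hl : l = l'
    · subst hl
      rw [Y_mul_same, wu_mul_col, wx_row, if_pos rfl]
      by_cases hj : j = j' <;> simp [hj, Prod.ext_iff]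
    · rw [Y_mul_ne V E n l l' hl]
      simp [Prod.ext_iff, hl]
  | r1rowSum I =>
    obtain ⟨k, i⟩ := I
    simp only [map_sum, fHom_ι, map_one, Gmap]
    rw [Fintype.sum_prod_type]
    simp only [← Finset.sum_mul, wu_rowSum, one_mul]
    exact wx_rowSum V E n k
  | r1colSum I =>
    obtain ⟨k, i⟩ := I
    simp only [map_sum, fHom_ι, map_one, Gmap]
    rw [Fintype.sum_prod_type]
    simp only [← Finset.sum_mul, wu_colSum, one_mul]
    exact wx_colSum V E n k
  | r2a γ hγ I K h =>
    obtain ⟨⟨m, a⟩, m', b⟩ := γ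
    rw [mem_unionEdges_iff] at hγ
    dsimp only at hγ
    obtain ⟨rfl, hab⟩ := hγ
    obtain ⟨l, i⟩ := I; obtain ⟨l', k⟩ := K
    simp only [map_mul, fHom_ι, map_zero, Gmap]
    rw [Y_mul_same, wx_row]
    by_cases hl : l = l'
    · subst hl
      have hik : (i, k) ∉ E := fun hc => h ((mem_unionEdges_iff V E n _).2 ⟨rfl, hc⟩)
      rw [if_pos rfl, wu_e2a V E n m (a, b) hab i k hik, zero_mul]
    · rw [if_neg hl, mul_zero]
  | r2a' γ hγ I K h =>
    obtain ⟨⟨m, a⟩, m', b⟩ := γ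
    rw [mem_unionEdges_iff] at hγ
    dsimp only at hγ
    obtain ⟨rfl, hab⟩ := hγ
    obtain ⟨l, i⟩ := I; obtain ⟨l', k⟩ := K
    simp only [map_mul, fHom_ι, map_zero, Gmap]
    rw [Y_mul_same, wx_row]
    by_cases hl : l' = l
    · subst hl
      have hik : (i, k) ∉ E := fun hc => h ((mem_unionEdges_iff V E n _).2 ⟨rfl, hc⟩)
      rw [if_pos rfl, wu_e2a' V E n m (a, b) hab i k hik, zero_mul]
    · rw [if_neg hl, mul_zero]
  | r2b γ hγ I K h =>
    obtain ⟨⟨m, a⟩, m', b⟩ := γ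
    rw [mem_unionEdges_iff] at hγ
    dsimp only at hγ
    obtain ⟨rfl, hab⟩ := hγ
    obtain ⟨l, i⟩ := I; obtain ⟨l', k⟩ := K
    simp only [map_mul, fHom_ι, map_zero, Gmap]
    by_cases hl : l = l'
    · subst hl
      have hik : (i, k) ∉ E := fun hc => h ((mem_unionEdges_iff V E n _).2 ⟨rfl, hc⟩)
      rw [Y_mul_same, wu_e2b V E n l (a, b) hab i k hik, zero_mul]
    · exact Y_mul_ne V E n l l' hl m i a k b
  | r2b' γ hγ I K h =>
    obtain ⟨⟨m, a⟩, m', b⟩ := γ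
    rw [mem_unionEdges_iff] at hγ
    dsimp only at hγ
    obtain ⟨rfl, hab⟩ := hγ
    obtain ⟨l, i⟩ := I; obtain ⟨l', k⟩ := K
    simp only [map_mul, fHom_ι, map_zero, Gmap]
    by_cases hl : l' = l
    · subst hl
      have hik : (i, k) ∉ E := fun hc => h ((mem_unionEdges_iff V E n _).2 ⟨rfl, hc⟩)
      rw [Y_mul_same, wu_e2b' V E n _ (a, b) hab i k hik, zero_mul]
    · exact Y_mul_ne V E n l' l hl m k b i a
  | r3 γ γ' hγ hγ' =>
    obtain ⟨⟨m, a⟩, m2, b⟩ := γ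
    obtain ⟨⟨p, c⟩, p2, d⟩ := γ'
    rw [mem_unionEdges_iff] at hγ hγ'
    dsimp only at hγ hγ'
    obtain ⟨rfl, hab⟩ := hγ
    obtain ⟨rfl, hcd⟩ := hγ'
    simp only [map_mul, fHom_ι, Gmap]
    rw [Y_mul_same, Y_mul_same, wu_e3 V E n m (a, b) (c, d) hab hcd]
  | r4a γ hγ =>
    obtain ⟨⟨p, c⟩, p2, d⟩ := γ
    rw [mem_unionEdges_iff] at hγ
    dsimp only at hγ
    obtain ⟨rfl, hcd⟩ := hγ
    simp only [map_sum, map_mul, fHom_ι, map_one, Gmap]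
    rw [sum_unionEdges]
    rw [Finset.sum_congr rfl fun q _ => by rw [Y_mul_same, wx_row, if_pos rfl]]
    rw [Finset.sum_product]
    simp only [← Finset.sum_mul]
    have key : ∀ m : Fin n, ∑ e ∈ E, wu V E n m e.1 c * wu V E n m e.2 d = 1 :=
      fun m => wu_e4a V E n m (c, d) hcd
    simp only [key, one_mul]
    exact wx_colSum V E n p
  | r4b γ hγ =>
    obtain ⟨⟨p, c⟩, p2, d⟩ := γ
    rw [mem_unionEdges_iff] at hγ
    dsimp only at hγ
    obtain ⟨rfl, hcd⟩ := hγ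
    simp only [map_sum, map_mul, fHom_ι, map_one, Gmap]
    rw [sum_unionEdges]
    rw [Finset.sum_congr rfl fun q _ => by rw [Y_mul_same, wx_row, if_pos rfl]]
    rw [Finset.sum_product]
    have key : ∀ m : Fin n,
        ∑ e ∈ E, (wu V E n p c e.1 * wu V E n p d e.2) * wxg V E n p m = wxg V E n p m := by
      intro m
      rw [← Finset.sum_mul, wu_e4b V E n p (c, d) hcd, one_mul]
    simp only [key]
    exact wx_rowSum V E n p

end Stmt15Aux

/-- For any finite graph `𝒢 = (V, E)` (not necessarily connected) and
`n ≥ 1`, there is a unique algebra homomorphism `Φ : A_aut(𝒢^{⊔n}) → W(𝒢,n)` with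
`Φ(X_{(k,i),(l,j)}) = u^k_{ij}·x_{kl}`. -/
theorem stmt_15 (V : Type) [Fintype V] [DecidableEq V] (E : Finset (V × V))
    (n : ℕ) (hn : 1 ≤ n) :
    ∃! Φ : AAut (Fin n × V) (unionEdges V E n) →ₐ[ℂ] WAlg V E n,
      ∀ (k l : Fin n) (i j : V),
        Φ (XA (Fin n × V) (unionEdges V E n) (k, i) (l, j)) =
          wu V E n k i j * wxg V E n k l := by
  refine ⟨RingQuot.liftAlgHom ℂ ⟨Stmt15Aux.fHom V E n, fun a b h => Stmt15Aux.compat V E n h⟩,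
    ?_, ?_⟩
  · intro k l i j
    rw [XA, RingQuot.liftAlgHom_mkAlgHom_apply, Stmt15Aux.fHom_ι]
    rfl
  · intro Φ' hΦ'
    apply RingQuot.ringQuot_ext'
    apply FreeAlgebra.hom_ext
    funext p
    obtain ⟨⟨k, i⟩, l, j⟩ := p
    show Φ' (RingQuot.mkAlgHom ℂ _ (FreeAlgebra.ι ℂ ((k, i), (l, j)))) = _
    rw [show RingQuot.mkAlgHom ℂ (GraphRel (Fin n × V) (unionEdges V E n))
        (FreeAlgebra.ι ℂ ((k, i), (l, j))) = XA (Fin n × V) (unionEdges V E n) (k, i) (l, j)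
      from rfl]
    rw [hΦ' k l i j]
    simp only [AlgHom.coe_comp, Function.comp_apply]
    rw [RingQuot.liftAlgHom_mkAlgHom_apply, Stmt15Aux.fHom_ι]
    rfl
end
end
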